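/- arXiv:1101.3074 — 3 statements merged into one kernel-verified Lean document; each statement's English description precedes it below -/
import Mathlib

section
/- For all integers n and all 1 ≤ k ≤ n−2, P(rank(M_{2n−k−1}) = 2n−k−2) ≥ 0.1 · P(rank(M_n) = k), where M_n and M_{2n−k−1} are random symmetric Bernoulli matrices of the respective sizes. -/
open scoped Classical BigOperators
open Matrix

noncomputable section

/-- The real number (±1) corresponding to a Boolean sign bit. -/
def signv (b : Bool) : ℝ := if b then 1 else -1

/-- The random symmetric Bernoulli (±1) matrix. -/
def symMat (n : ℕ) (g : Fin n → Fin n → Bool) : Matrix (Fin n) (Fin n) ℝ :=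
  Matrix.of fun i j => if i ≤ j then signv (g i j) else signv (g j i)

/-- Probability of an event for the random symmetric Bernoulli matrix. -/
def probSym (n : ℕ) (p : Matrix (Fin n) (Fin n) ℝ → Prop) : ℝ :=
  ((Finset.univ.filter fun g : Fin n → Fin n → Bool => p (symMat n g)).card : ℝ) /
    (Fintype.card (Fin n → Fin n → Bool) : ℝ)

lemma signv_injective : Function.Injective signv := by
  intro a b h
  cases a <;> cases b <;> simp [signv] at h ⊢ <;> norm_num at h

lemma signv_ne_zero (b : Bool) : signv b ≠ 0 := by
  cases b <;> simp [signv]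

-- finrank of sup with a line outside
lemma finrank_sup_span_singleton {V : Type*} [AddCommGroup V] [Module ℝ V]
    [FiniteDimensional ℝ V] (W : Submodule ℝ V) (v : V) (hv : v ∉ W) :
    Module.finrank ℝ (W ⊔ Submodule.span ℝ {v} : Submodule ℝ V) = Module.finrank ℝ W + 1 := by
  have hv0 : v ≠ 0 := fun h => hv (h ▸ W.zero_mem)
  have hinf : W ⊓ Submodule.span ℝ {v} = ⊥ := by
    rw [Submodule.eq_bot_iff]
    rintro u ⟨huW, huv⟩
    rcases Submodule.mem_span_singleton.mp huv with ⟨c, rfl⟩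
    rcases eq_or_ne c 0 with rfl | hc
    · simp
    · exact absurd (by simpa [smul_smul, inv_mul_cancel₀ hc] using W.smul_mem c⁻¹ huW) hv
  have := Submodule.finrank_sup_add_finrank_inf_eq W (Submodule.span ℝ {v})
  rw [hinf] at this
  simp [finrank_span_singleton hv0] at this
  omega

-- counting: number of ±1 (bool-sign) vectors in a subspace of dimension ≤ r is ≤ 2^r
lemma card_sign_mem_le (t r : ℕ) (W : Submodule ℝ (Fin t → ℝ)) (hW : Module.finrank ℝ W ≤ r) :
    (Finset.univ.filter fun x : Fin t → Bool => (fun i => signv (x i)) ∈ W).card ≤ 2 ^ r := by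
  classical
  -- coordinate functionals on W
  set φ : Fin t → Module.Dual ℝ W := fun i => (LinearMap.proj i).comp W.subtype with hφ
  have hsep : ∀ w : W, (∀ i, φ i w = 0) → w = 0 := by
    intro w hw
    ext i
    simpa [hφ] using hw i
  -- they span the dual
  have hspan : Submodule.span ℝ (Set.range φ) = ⊤ := by
    by_contra h
    have hco : (Submodule.span ℝ (Set.range φ)).dualCoannihilator = ⊥ := by
      rw [Submodule.eq_bot_iff]
      intro w hwmem
      rw [Submodule.mem_dualCoannihilator] at hwmem
      exact hsep w fun i => hwmem (φ i) (Submodule.subset_span ⟨i, rfl⟩)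
    have := Subspace.finrank_add_finrank_dualCoannihilator_eq (Submodule.span ℝ (Set.range φ))
    rw [hco] at this
    simp at this
    rw [← Subspace.dual_finrank_eq (K := ℝ) (V := W)] at this
    exact h (Submodule.eq_top_of_finrank_eq this)
  -- extract a linearly independent spanning subset
  obtain ⟨b, hbsub, hbspan, hbli⟩ := exists_linearIndependent ℝ (Set.range φ)
  rw [hspan] at hbspan
  have hbfin : b.Finite := hbli.setFinite
  have _ : Fintype b := hbfin.fintype
  have hbcard : b.toFinset.card = Module.finrank ℝ W := by
    have h1 : Module.finrank ℝ (Submodule.span ℝ b) = b.toFinset.card :=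
      finrank_span_set_eq_card hbli
    rw [hbspan, finrank_top, Subspace.dual_finrank_eq] at h1
    omega
  -- choose coordinates realizing the functionals in b
  have hchoice : ∀ f ∈ b, ∃ i : Fin t, φ i = f := fun f hf => hbsub hf
  set s : Finset (Fin t) :=
      b.toFinset.attach.image
        (fun f => (hchoice f.1 (Set.mem_toFinset.mp f.2)).choose) with hs
  have hscard : s.card ≤ r := by
    refine le_trans (le_trans Finset.card_image_le ?_) hW
    rw [Finset.card_attach]
    exact le_of_eq hbcard
  -- restriction to s is injective on W
  have hinj : ∀ w : W, (∀ i ∈ s, (w : Fin t → ℝ) i = 0) → w = 0 := by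
    intro w hw
    have hb0 : ∀ f ∈ b, f w = 0 := by
      intro f hf
      have hf' : f ∈ b.toFinset := Set.mem_toFinset.mpr hf
      have hmem : (hchoice f (Set.mem_toFinset.mp hf')).choose ∈ s :=
        Finset.mem_image.mpr ⟨⟨f, hf'⟩, Finset.mem_attach _ _, rfl⟩
      have := hw _ hmem
      rw [← (hchoice f (Set.mem_toFinset.mp hf')).choose_spec]
      simpa [φ] using this
    have hall : ∀ f : Module.Dual ℝ W, f w = 0 := by
      intro f
      have hf : f ∈ Submodule.span ℝ b := by rw [hbspan]; trivial
      refine Submodule.span_induction (p := fun f _ => f w = 0) ?_ ?_ ?_ ?_ hf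
      · exact hb0
      · simp
      · intro f g _ _ hf hg; simp [hf, hg]
      · intro c f _ hf; simp [hf]
    exact hsep w fun i => hall (φ i)
  -- injection into Bool-valued functions on s
  have : Function.Injective
      (fun x : {x : Fin t → Bool // (fun i => signv (x i)) ∈ W} => fun i : s => x.1 i) := by
    rintro ⟨x, hx⟩ ⟨y, hy⟩ hxy
    have hdiff : ((⟨fun i => signv (x i), hx⟩ : W) - ⟨fun i => signv (y i), hy⟩ : W) = 0 := by
      apply hinj
      intro i hi
      have h1 : x i = y i := congrFun hxy ⟨i, hi⟩
      show signv (x i) - signv (y i) = 0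
      simp [h1]
    have heq : (fun i => signv (x i)) = fun i => signv (y i) := by
      have h2 := sub_eq_zero.mp (congrArg Subtype.val hdiff)
      exact h2
    have hxy' : x = y := funext fun i => signv_injective (congrFun heq i)
    exact Subtype.ext hxy'
  calc (Finset.univ.filter fun x : Fin t → Bool => (fun i => signv (x i)) ∈ W).card
      = Fintype.card {x : Fin t → Bool // (fun i => signv (x i)) ∈ W} :=
        (Fintype.card_subtype _).symm
    _ ≤ Fintype.card (s → Bool) := Fintype.card_le_of_injective _ this
    _ = 2 ^ s.card := by simp [Fintype.card_fun]
    _ ≤ 2 ^ r := Nat.pow_le_pow_right (by norm_num) hscard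

lemma rank_eq_finrank_span_cols_T {m n : Type*} [Fintype m] [Fintype n] (A : Matrix m n ℝ) :
    A.rank = Module.finrank ℝ (Submodule.span ℝ (Set.range Aᵀ)) :=
  Matrix.rank_eq_finrank_span_cols A

lemma range_mulVecLin_T {m n : Type*} [Fintype m] [Fintype n] (A : Matrix m n ℝ) :
    LinearMap.range A.mulVecLin = Submodule.span ℝ (Set.range Aᵀ) :=
  Matrix.range_mulVecLin A

/-- bordered symmetric matrix -/
def bmat {t : ℕ} (A : Matrix (Fin t) (Fin t) ℝ) (x : Fin t → ℝ) (d : ℝ) :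
    Matrix (Fin (t + 1)) (Fin (t + 1)) ℝ :=
  Matrix.of fun i j =>
    Fin.lastCases (Fin.lastCases d (fun j' => x j') j)
      (fun i' => Fin.lastCases (x i') (fun j' => A i' j') j) i

@[simp] lemma bmat_cc {t : ℕ} (A : Matrix (Fin t) (Fin t) ℝ) (x : Fin t → ℝ) (d : ℝ)
    (i j : Fin t) : bmat A x d i.castSucc j.castSucc = A i j := by
  simp [bmat]

@[simp] lemma bmat_cl {t : ℕ} (A : Matrix (Fin t) (Fin t) ℝ) (x : Fin t → ℝ) (d : ℝ)
    (i : Fin t) : bmat A x d i.castSucc (Fin.last t) = x i := by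
  simp [bmat]

@[simp] lemma bmat_lc {t : ℕ} (A : Matrix (Fin t) (Fin t) ℝ) (x : Fin t → ℝ) (d : ℝ)
    (j : Fin t) : bmat A x d (Fin.last t) j.castSucc = x j := by
  simp [bmat]

@[simp] lemma bmat_ll {t : ℕ} (A : Matrix (Fin t) (Fin t) ℝ) (x : Fin t → ℝ) (d : ℝ) :
    bmat A x d (Fin.last t) (Fin.last t) = d := by
  simp [bmat]

theorem rank_bmat {t : ℕ} (A : Matrix (Fin t) (Fin t) ℝ) (hA : Aᵀ = A) (x : Fin t → ℝ)
    (hx : x ∉ Submodule.span ℝ (Set.range Aᵀ)) (d : ℝ) :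
    (bmat A x d).rank = A.rank + 2 := by
  classical
  set B := bmat A x d with hB
  set D : Matrix (Fin (t + 1)) (Fin t) ℝ :=
    Matrix.of (fun i j => Fin.lastCases (x j) (fun i' => A i' j) i) with hD
  set clast : Fin (t + 1) → ℝ := Fin.lastCases d (fun i' => x i') with hclast
  -- columns of B
  have hcols : Set.range Bᵀ = Set.range Dᵀ ∪ {clast} := by
    ext v
    constructor
    · rintro ⟨j, rfl⟩
      refine Fin.lastCases ?_ (fun j' => ?_) j
      · right
        refine Set.mem_singleton_iff.mpr ?_
        funext i
        refine Fin.lastCases ?_ (fun i' => ?_) i <;> simp [hB, hclast, Matrix.transpose_apply]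
      · left
        refine ⟨j', ?_⟩
        funext i
        refine Fin.lastCases ?_ (fun i' => ?_) i <;>
          simp [hB, hD, Matrix.transpose_apply]
    · rintro (⟨j, rfl⟩ | hv)
      · refine ⟨j.castSucc, ?_⟩
        funext i
        refine Fin.lastCases ?_ (fun i' => ?_) i <;> simp [hB, hD, Matrix.transpose_apply]
      · refine ⟨Fin.last t, ?_⟩
        rw [Set.mem_singleton_iff] at hv
        subst hv
        funext i
        refine Fin.lastCases ?_ (fun i' => ?_) i <;> simp [hB, hclast, Matrix.transpose_apply]
  -- rows of D are rows of A plus x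
  have hrowsD : Set.range (fun i : Fin (t+1) => D i) = Set.range (fun i : Fin t => A i) ∪ {x} := by
    ext v
    constructor
    · rintro ⟨i, rfl⟩
      refine Fin.lastCases ?_ (fun i' => ?_) i
      · right
        show D (Fin.last t) ∈ {x}
        rw [Set.mem_singleton_iff]
        funext j
        simp [hD]
      · left
        exact ⟨i', funext fun j => by simp [hD]⟩
    · rintro (⟨i, rfl⟩ | hv)
      · exact ⟨i.castSucc, by funext j; simp [hD]⟩
      · rw [Set.mem_singleton_iff] at hv; subst hv
        exact ⟨Fin.last t, by funext j; simp [hD]⟩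
  have hrangeA : Set.range (fun i : Fin t => A i) = Set.range Aᵀ := by
    rw [hA]
  -- rank of D
  have hrankD : D.rank = A.rank + 1 := by
    rw [← D.rank_transpose, rank_eq_finrank_span_cols_T, Matrix.transpose_transpose]
    show Module.finrank ℝ (Submodule.span ℝ (Set.range fun i => D i)) = A.rank + 1
    rw [hrowsD, hrangeA, Submodule.span_union]
    rw [finrank_sup_span_singleton _ x hx, ← rank_eq_finrank_span_cols_T]
  -- clast not in the span of columns of D
  have hclast_not : clast ∉ Submodule.span ℝ (Set.range Dᵀ) := by
    intro hmem
    rw [← range_mulVecLin_T] at hmem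
    obtain ⟨c, hc⟩ := hmem
    apply hx
    rw [← range_mulVecLin_T]
    refine ⟨c, ?_⟩
    funext i
    have h1 := congrFun hc i.castSucc
    simp only [Matrix.mulVecLin_apply] at h1 ⊢
    have h2 : clast i.castSucc = x i := by simp [hclast]
    have h3 : (D *ᵥ c) i.castSucc = (A *ᵥ c) i := by
      simp [Matrix.mulVec, dotProduct, hD]
    rw [← h3, h1, h2]
  -- put it together
  rw [rank_eq_finrank_span_cols_T, hcols, Submodule.span_union]
  rw [finrank_sup_span_singleton _ clast hclast_not, ← rank_eq_finrank_span_cols_T, hrankD]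

lemma symMat_transpose (t : ℕ) (g : Fin t → Fin t → Bool) : (symMat t g)ᵀ = symMat t g := by
  funext i j
  show symMat t g j i = symMat t g i j
  rcases le_total i j with h | h
  · rcases eq_or_lt_of_le h with rfl | hlt
    · rfl
    · simp [symMat, h, hlt.not_ge]
  · rcases eq_or_lt_of_le h with rfl | hlt
    · rfl
    · simp [symMat, h, hlt.not_ge]

/-- restriction to the leading principal block -/
def cut (s t : ℕ) (h : s ≤ t) (g : Fin t → Fin t → Bool) : Fin s → Fin s → Bool :=
  fun i j => g (Fin.castLE h i) (Fin.castLE h j)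

lemma cut_self (t : ℕ) (g : Fin t → Fin t → Bool) : cut t t le_rfl g = g := rfl

/-- the extension of a sign pattern by one row/column -/
def extg {t : ℕ} (g' : Fin t → Fin t → Bool) (x : Fin t → Bool) (d : Bool) (y : Fin t → Bool) :
    Fin (t + 1) → Fin (t + 1) → Bool :=
  fun i j =>
    Fin.lastCases (Fin.lastCases d (fun j' => y j') j)
      (fun i' => Fin.lastCases (x i') (fun j' => g' i' j') j) i

lemma cut_extg {t : ℕ} (g' : Fin t → Fin t → Bool) (x : Fin t → Bool) (d : Bool)
    (y : Fin t → Bool) : cut t (t + 1) (Nat.le_succ t) (extg g' x d y) = g' := by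
  funext i j
  show extg g' x d y i.castSucc j.castSucc = g' i j
  simp [extg]

lemma symMat_succ (t : ℕ) (g : Fin (t + 1) → Fin (t + 1) → Bool) :
    symMat (t + 1) g =
      bmat (symMat t (cut t (t + 1) (Nat.le_succ t) g))
        (fun i => signv (g i.castSucc (Fin.last t))) (signv (g (Fin.last t) (Fin.last t))) := by
  funext i j
  refine Fin.lastCases ?_ (fun i' => ?_) i
  · refine Fin.lastCases ?_ (fun j' => ?_) j
    · simp [symMat, bmat]
    · have h1 : ¬((Fin.last t : Fin (t+1)) ≤ j'.castSucc) := (Fin.castSucc_lt_last j').not_ge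
      simp [symMat, bmat, h1]
  · refine Fin.lastCases ?_ (fun j' => ?_) j
    · have h1 : i'.castSucc ≤ (Fin.last t : Fin (t+1)) := Fin.le_last _
      simp [symMat, bmat, h1]
    · have h1 : i'.castSucc ≤ j'.castSucc ↔ i' ≤ j' := Fin.castSucc_le_castSucc_iff
      show symMat (t+1) g i'.castSucc j'.castSucc = _
      simp only [bmat, symMat, cut, Matrix.of_apply, Fin.lastCases_castSucc]
      rcases le_or_gt i' j' with h | h
      · rw [if_pos (h1.mpr h), if_pos h]; rfl
      · rw [if_neg (by simpa [h1] using h.not_ge), if_neg h.not_ge]; rfl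

lemma symMat_extg {t : ℕ} (g' : Fin t → Fin t → Bool) (x : Fin t → Bool) (d : Bool)
    (y : Fin t → Bool) :
    symMat (t + 1) (extg g' x d y) =
      bmat (symMat t g') (fun i => signv (x i)) (signv d) := by
  rw [symMat_succ, cut_extg]
  have hx : (fun i => signv (extg g' x d y i.castSucc (Fin.last t))) = fun i => signv (x i) := by
    funext i
    congr 1
    simp [extg]
  have hd : signv (extg g' x d y (Fin.last t) (Fin.last t)) = signv d := by
    congr 1
    simp [extg]
  rw [hx, hd]

/-- the chain condition: every leading principal block from size `n` up has the right rank -/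
def goodg (n k t : ℕ) (g : Fin t → Fin t → Bool) : Prop :=
  ∀ s, n ≤ s → ∀ hs : s ≤ t, (symMat s (cut s t hs g)).rank = k + 2 * (s - n)

def Ng (n k t : ℕ) : ℕ := (Finset.univ.filter fun g : Fin t → Fin t → Bool => goodg n k t g).card

lemma goodg_succ (n k t : ℕ) (hn : n ≤ t) (g : Fin (t + 1) → Fin (t + 1) → Bool) :
    goodg n k (t + 1) g ↔
      goodg n k t (cut t (t + 1) (Nat.le_succ t) g) ∧
        (symMat (t + 1) g).rank = k + 2 * (t + 1 - n) := by
  constructor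
  · intro h
    refine ⟨fun s hns hs => ?_, ?_⟩
    · exact h s hns (hs.trans (Nat.le_succ t))
    · have := h (t + 1) (hn.trans (Nat.le_succ t)) le_rfl
      rwa [cut_self] at this
  · rintro ⟨h1, h2⟩ s hns hs
    by_cases hst : s ≤ t
    · exact h1 s hns hst
    · have hseq : s = t + 1 := by omega
      subst hseq
      rwa [cut_self]

lemma extg_injOn {t : ℕ} (g' : Fin t → Fin t → Bool) :
    Function.Injective (fun p : (Fin t → Bool) × Bool × (Fin t → Bool) =>
      extg g' p.1 p.2.1 p.2.2) := by
  rintro ⟨x, d, y⟩ ⟨x', d', y'⟩ h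
  simp only [Prod.mk.injEq]
  refine ⟨funext fun i => ?_, ?_, funext fun j => ?_⟩
  · have := congrFun (congrFun h i.castSucc) (Fin.last t)
    simpa [extg] using this
  · have := congrFun (congrFun h (Fin.last t)) (Fin.last t)
    simpa [extg] using this
  · have := congrFun (congrFun h (Fin.last t)) j.castSucc
    simpa [extg] using this

lemma fiber_bound (n k t : ℕ) (hn : n ≤ t) (g' : Fin t → Fin t → Bool)
    (hgood : goodg n k t g') :
    (2 ^ t - 2 ^ (k + 2 * (t - n))) * 2 ^ (t + 1) ≤
      ((Finset.univ.filter fun g : Fin (t+1) → Fin (t+1) → Bool => goodg n k (t+1) g).filter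
        fun g => cut t (t + 1) (Nat.le_succ t) g = g').card := by
  classical
  set r := k + 2 * (t - n) with hr
  set A := symMat t g' with hAdef
  have hA : A.rank = r := by
    have := hgood t hn le_rfl
    rwa [cut_self] at this
  set W := Submodule.span ℝ (Set.range Aᵀ) with hWdef
  have hWr : Module.finrank ℝ W ≤ r := le_of_eq (by rw [← rank_eq_finrank_span_cols_T, hA])
  have hbad := card_sign_mem_le t r W hWr
  set S : Finset ((Fin t → Bool) × Bool × (Fin t → Bool)) :=
    Finset.univ.filter fun p => ¬((fun i => signv (p.1 i)) ∈ W) with hSdef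
  have hSprod : S = (Finset.univ.filter fun x : Fin t → Bool => ¬((fun i => signv (x i)) ∈ W))
      ×ˢ (Finset.univ : Finset (Bool × (Fin t → Bool))) := by
    ext p
    simp [hSdef, Finset.mem_product]
  have hScard : (2 ^ t - 2 ^ r) * 2 ^ (t + 1) ≤ S.card := by
    rw [hSprod, Finset.card_product]
    have huniv : (Finset.univ : Finset (Bool × (Fin t → Bool))).card = 2 ^ (t + 1) := by
      simp [Fintype.card_prod, Fintype.card_fun, pow_succ, Nat.mul_comm]
    rw [huniv]
    apply Nat.mul_le_mul_right
    have hsplit := Finset.card_filter_add_card_filter_not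
      (s := (Finset.univ : Finset (Fin t → Bool)))
      (p := fun x => (fun i => signv (x i)) ∈ W)
    have hcard : (Finset.univ : Finset (Fin t → Bool)).card = 2 ^ t := by
      simp [Fintype.card_fun]
    set a := (Finset.univ.filter fun x : Fin t → Bool => (fun i => signv (x i)) ∈ W).card with ha
    set b := (Finset.univ.filter fun x : Fin t → Bool =>
      ¬((fun i => signv (x i)) ∈ W)).card with hb
    rw [hcard] at hsplit
    beta_reduce at hsplit
    refine Nat.sub_le_of_le_add ?_
    calc (2:ℕ) ^ t = a + b := hsplit.symm
      _ ≤ 2 ^ r + b := Nat.add_le_add_right hbad b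
      _ = b + 2 ^ r := Nat.add_comm _ _
  refine le_trans hScard (Finset.card_le_card_of_injOn
    (fun p => extg g' p.1 p.2.1 p.2.2) ?_ ?_)
  · rintro ⟨x, d, y⟩ hp
    simp only [hSdef, Finset.mem_coe, Finset.mem_filter, Finset.mem_univ, true_and] at hp
    simp only [Finset.mem_coe, Finset.mem_filter, Finset.mem_univ, true_and]
    refine ⟨(goodg_succ n k t hn _).mpr ⟨?_, ?_⟩, cut_extg g' x d y⟩
    · rw [cut_extg]; exact hgood
    · rw [symMat_extg, ← hAdef]
      rw [rank_bmat A (symMat_transpose t g') _ hp (signv d), hA]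
      rw [Nat.succ_sub hn, hr, Nat.succ_eq_add_one]
      ring
  · intro p _ q _ h
    exact extg_injOn g' h

lemma step_lemma (n k t : ℕ) (hn : n ≤ t) :
    Ng n k t * ((2 ^ t - 2 ^ (k + 2 * (t - n))) * 2 ^ (t + 1)) ≤ Ng n k (t + 1) := by
  classical
  have hfib : Ng n k (t+1) =
      ∑ g' : Fin t → Fin t → Bool,
        ((Finset.univ.filter fun g : Fin (t+1) → Fin (t+1) → Bool =>
          goodg n k (t+1) g).filter fun g => cut t (t + 1) (Nat.le_succ t) g = g').card :=
    Finset.card_eq_sum_card_fiberwise (fun g _ => Finset.mem_univ _)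
  rw [hfib]
  calc Ng n k t * ((2 ^ t - 2 ^ (k + 2 * (t - n))) * 2 ^ (t + 1))
      = ∑ _g' ∈ (Finset.univ.filter fun g' : Fin t → Fin t → Bool => goodg n k t g'),
          ((2 ^ t - 2 ^ (k + 2 * (t - n))) * 2 ^ (t + 1)) := by
        rw [Finset.sum_const, smul_eq_mul]; rfl
    _ ≤ ∑ g' ∈ (Finset.univ.filter fun g' : Fin t → Fin t → Bool => goodg n k t g'),
          ((Finset.univ.filter fun g : Fin (t+1) → Fin (t+1) → Bool =>
            goodg n k (t+1) g).filter fun g => cut t (t + 1) (Nat.le_succ t) g = g').card := by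
        refine Finset.sum_le_sum fun g' hg' => ?_
        exact fiber_bound n k t hn g' (Finset.mem_filter.mp hg').2
    _ ≤ _ := Finset.sum_le_sum_of_subset (Finset.subset_univ _)

lemma main_ind (n k : ℕ) (hk2 : k + 2 ≤ n) :
    ∀ t, n ≤ t → t ≤ 2 * n - k - 1 →
      (Ng n k n : ℝ) * (1 - ∑ s ∈ Finset.Ico n t, (2:ℝ) ^ ((k:ℤ) + s - 2 * n)) * 2 ^ (t * t)
        ≤ (Ng n k t : ℝ) * 2 ^ (n * n) := by
  refine Nat.le_induction ?_ ?_
  · intro _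
    simp
  · intro t hn IH hb
    have htB : t ≤ 2 * n - k - 1 := le_trans (Nat.le_succ t) hb
    have hrt : k + 2 * (t - n) ≤ t := by omega
    set r := k + 2 * (t - n) with hr
    set E := ∑ s ∈ Finset.Ico n t, (2:ℝ) ^ ((k:ℤ) + s - 2 * n) with hE
    set ε := (2:ℝ) ^ ((k:ℤ) + t - 2 * n) with hεdef
    have hsum : ∑ s ∈ Finset.Ico n (t+1), (2:ℝ) ^ ((k:ℤ) + s - 2 * n) = E + ε := by
      rw [Nat.Ico_succ_right_eq_insert_Ico hn, Finset.sum_insert Finset.right_notMem_Ico]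
      ring
    rw [hsum]
    have hε0 : (0:ℝ) ≤ ε := le_of_lt (zpow_pos (by norm_num) _)
    have hε1 : ε ≤ 1 := zpow_le_one_of_nonpos₀ (by norm_num) (by omega)
    have hE0 : (0:ℝ) ≤ E :=
      Finset.sum_nonneg fun s _ => le_of_lt (zpow_pos (by norm_num) _)
    have hNn0 : (0:ℝ) ≤ (Ng n k n : ℝ) := Nat.cast_nonneg _
    have hεv : ε = (2:ℝ) ^ r / 2 ^ t := by
      rw [hεdef, eq_div_iff (by positivity)]
      rw [← zpow_natCast (2:ℝ) t, ← zpow_add₀ (by norm_num : (2:ℝ) ≠ 0),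
        ← zpow_natCast (2:ℝ) r]
      congr 1
      omega
    have hstepR : (Ng n k t : ℝ) * ((2 ^ t - 2 ^ r) * 2 ^ (t + 1)) ≤ (Ng n k (t+1) : ℝ) := by
      have h1 := step_lemma n k t hn
      have h2 : ((Ng n k t * ((2 ^ t - 2 ^ r) * 2 ^ (t + 1)) : ℕ) : ℝ) ≤ (Ng n k (t+1) : ℝ) :=
        Nat.cast_le.mpr h1
      rw [Nat.cast_mul, Nat.cast_mul,
        Nat.cast_sub (Nat.pow_le_pow_right (by norm_num) hrt)] at h2
      push_cast at h2
      exact h2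
    calc (Ng n k n : ℝ) * (1 - (E + ε)) * 2 ^ ((t+1) * (t+1))
        ≤ (Ng n k n : ℝ) * ((1 - E) * (1 - ε)) * 2 ^ ((t+1) * (t+1)) := by
          have h1 : 1 - (E + ε) ≤ (1 - E) * (1 - ε) := by nlinarith [mul_nonneg hE0 hε0]
          have h2 := mul_le_mul_of_nonneg_left h1 hNn0
          exact mul_le_mul_of_nonneg_right h2 (by positivity)
      _ = ((Ng n k n : ℝ) * (1 - E) * 2 ^ (t * t)) * ((1 - ε) * (2 ^ t * 2 ^ t * 2)) := by
          rw [show (t+1) * (t+1) = t * t + (t + (t + 1)) by ring, pow_add, pow_add, pow_add,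
            pow_one]
          ring
      _ ≤ ((Ng n k t : ℝ) * 2 ^ (n * n)) * ((1 - ε) * (2 ^ t * 2 ^ t * 2)) := by
          refine mul_le_mul_of_nonneg_right (IH htB) ?_
          have h3 : (0:ℝ) ≤ 1 - ε := by linarith
          positivity
      _ = ((Ng n k t : ℝ) * ((2 ^ t - 2 ^ r) * 2 ^ (t + 1))) * 2 ^ (n * n) := by
          rw [hεv, pow_succ]
          have h4 : (2:ℝ) ^ t ≠ 0 := by positivity
          field_simp
      _ ≤ (Ng n k (t+1) : ℝ) * 2 ^ (n * n) :=
          mul_le_mul_of_nonneg_right hstepR (by positivity)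

/-- For all `n` and all `1 ≤ k ≤ n - 2`:
`P(rank(M_{2n-k-1}) = 2n-k-2) ≥ 0.1 · P(rank(M_n) = k)`. -/
theorem rank_increase (n k : ℕ) (hk1 : 1 ≤ k) (hk2 : k + 2 ≤ n) :
    0.1 * probSym n (fun M => M.rank = k) ≤
      probSym (2 * n - k - 1) (fun M => M.rank = 2 * n - k - 2) := by
  classical
  set m := 2 * n - k - 1 with hm
  have hmn : n ≤ m := by omega
  -- Ng at level n is the count for rank = k
  have hNgn : Ng n k n =
      (Finset.univ.filter fun g : Fin n → Fin n → Bool => (symMat n g).rank = k).card := by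
    unfold Ng
    congr 1
    apply Finset.filter_congr
    intro g _
    constructor
    · intro h
      have := h n le_rfl le_rfl
      rwa [cut_self, Nat.sub_self, Nat.mul_zero, Nat.add_zero] at this
    · intro h s hns hsn
      have hsn' : s = n := le_antisymm hsn hns
      subst hsn'
      rwa [cut_self, Nat.sub_self, Nat.mul_zero, Nat.add_zero]
  -- Ng at level m is at most the count for rank = m - 1
  have hNgm : Ng n k m ≤
      (Finset.univ.filter fun g : Fin m → Fin m → Bool =>
        (symMat m g).rank = 2 * n - k - 2).card := by
    apply Finset.card_le_card
    intro g hg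
    rw [Finset.mem_filter] at hg ⊢
    refine ⟨hg.1, ?_⟩
    have := hg.2 m hmn le_rfl
    rw [cut_self] at this
    rw [this]
    omega
  -- sum bound
  have hEm : ∑ s ∈ Finset.Ico n m, (2:ℝ) ^ ((k:ℤ) + s - 2 * n) ≤ 1 / 2 := by
    rw [Finset.sum_Ico_eq_sum_range]
    have hterm : ∀ i ∈ Finset.range (m - n),
        (2:ℝ) ^ ((k:ℤ) + ((n + i : ℕ) : ℤ) - 2 * n) = (2:ℝ) ^ ((k:ℤ) - n) * 2 ^ i := by
      intro i _
      rw [← zpow_natCast (2:ℝ) i, ← zpow_add₀ (by norm_num : (2:ℝ) ≠ 0)]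
      congr 1
      omega
    rw [Finset.sum_congr rfl hterm, ← Finset.mul_sum]
    rw [geom_sum_eq (by norm_num : (2:ℝ) ≠ 1)]
    have h1 : ((2:ℝ) ^ (m - n) - 1) / (2 - 1) ≤ 2 ^ (m - n) := by
      norm_num
    have h2 : (0:ℝ) < (2:ℝ) ^ ((k:ℤ) - n) := zpow_pos (by norm_num) _
    calc (2:ℝ) ^ ((k:ℤ) - n) * ((2 ^ (m - n) - 1) / (2 - 1))
        ≤ (2:ℝ) ^ ((k:ℤ) - n) * 2 ^ (m - n) := by
          exact mul_le_mul_of_nonneg_left h1 (le_of_lt h2)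
      _ = (2:ℝ) ^ ((k:ℤ) - n + (m - n : ℕ)) := by
          rw [zpow_add₀ (by norm_num : (2:ℝ) ≠ 0), zpow_natCast]
      _ ≤ 1 / 2 := by
          have : (k:ℤ) - n + (m - n : ℕ) = -1 := by omega
          rw [this]
          norm_num
  -- main inequality
  have hmain := main_ind n k hk2 m hmn le_rfl
  set Cn := (Finset.univ.filter fun g : Fin n → Fin n → Bool => (symMat n g).rank = k).card
    with hCn
  set Cm := (Finset.univ.filter fun g : Fin m → Fin m → Bool =>
      (symMat m g).rank = 2 * n - k - 2).card with hCm
  rw [hNgn] at hmain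
  have hNg2 : (Ng n k m : ℝ) ≤ Cm := Nat.cast_le.mpr hNgm
  have hCn0 : (0:ℝ) ≤ (Cn : ℝ) := Nat.cast_nonneg _
  have hkey : (Cn : ℝ) * (1/2) * 2 ^ (m * m) ≤ (Cm : ℝ) * 2 ^ (n * n) := by
    have h5 : (Cn : ℝ) * (1/2) * 2 ^ (m * m) ≤
        (Cn : ℝ) * (1 - ∑ s ∈ Finset.Ico n m, (2:ℝ) ^ ((k:ℤ) + s - 2 * n)) * 2 ^ (m * m) := by
      have : (1:ℝ)/2 ≤ 1 - ∑ s ∈ Finset.Ico n m, (2:ℝ) ^ ((k:ℤ) + s - 2 * n) := by linarith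
      have h6 := mul_le_mul_of_nonneg_left this hCn0
      exact mul_le_mul_of_nonneg_right h6 (by positivity)
    refine le_trans h5 (le_trans hmain ?_)
    exact mul_le_mul_of_nonneg_right hNg2 (by positivity)
  -- unfold probSym
  have hcardn : (Fintype.card (Fin n → Fin n → Bool) : ℝ) = 2 ^ (n * n) := by
    simp [Fintype.card_fun, ← pow_mul]
  have hcardm : (Fintype.card (Fin m → Fin m → Bool) : ℝ) = 2 ^ (m * m) := by
    simp [Fintype.card_fun, ← pow_mul]
  have hps1 : probSym n (fun M => M.rank = k) = (Cn : ℝ) / 2 ^ (n * n) := by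
    rw [probSym, hcardn, hCn]
    congr
  have hps2 : probSym m (fun M => M.rank = 2 * n - k - 2) = (Cm : ℝ) / 2 ^ (m * m) := by
    rw [probSym, hcardm, hCm]
    congr
  rw [hps1, hps2]
  rw [mul_div_assoc' (0.1 : ℝ), div_le_div_iff₀ (by positivity) (by positivity)]
  nlinarith [pow_pos (by norm_num : (0:ℝ) < 2) (m * m), pow_pos (by norm_num : (0:ℝ) < 2) (n * n)]

end
end

section
/- For every positive integer r there is a constant K_r such that the following holds. Let P ⊆ ℝ be a proper symmetric GAP of rank r and let U ⊆ P be a finite subset. Then there exists a proper symmetric GAP Q ⊆ ℝ of some rank r' ≤ r containing U, with |Q| ≤ K_r·|P|, such that U spans Q: writing each u ∈ U uniquely as u = m₁(u)g₁ + ⋯ + m_{r'}(u)g_{r'} with (m₁(u),…,m_{r'}(u)) in the defining integer box of Q (uniqueness holds since Q is proper), the set of coefficient vectors {(m₁(u),…,m_{r'}(u)) : u ∈ U} spans ℝ^{r'}. -/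
open scoped Classical BigOperators

noncomputable section

open Metric Module Submodule

set_option maxHeartbeats 1600000


variable {V : Type} [NormedAddCommGroup V] [NormedSpace ℝ V]

lemma infDist_add_le_sub (W : Submodule ℝ V) (a b : V) :
    infDist (a + b) (W : Set V) ≤ infDist a (W : Set V) + infDist b (W : Set V) := by
  have hne : (W : Set V).Nonempty := ⟨0, W.zero_mem⟩
  refine le_of_forall_pos_le_add (fun ε hε => ?_)
  obtain ⟨wa, hwa, hda⟩ := (infDist_lt_iff hne).mp
    (show infDist a (W : Set V) < infDist a (W : Set V) + ε/2 by linarith)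
  obtain ⟨wb, hwb, hdb⟩ := (infDist_lt_iff hne).mp
    (show infDist b (W : Set V) < infDist b (W : Set V) + ε/2 by linarith)
  have : infDist (a + b) (W : Set V) ≤ dist (a + b) (wa + wb) :=
    infDist_le_dist_of_mem (W.add_mem hwa hwb)
  have h2 : dist (a + b) (wa + wb) ≤ dist a wa + dist b wb := dist_add_add_le _ _ _ _
  linarith

lemma infDist_smul_le (W : Submodule ℝ V) (c : ℝ) (y : V) :
    infDist (c • y) (W : Set V) ≤ |c| * infDist y (W : Set V) := by
  have hne : (W : Set V).Nonempty := ⟨0, W.zero_mem⟩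
  refine le_of_forall_pos_le_add (fun ε hε => ?_)
  rcases eq_or_ne c 0 with rfl | hc
  · simp only [zero_smul]
    have h0 : infDist (0:V) (W : Set V) = 0 := infDist_zero_of_mem W.zero_mem
    rw [h0]
    have : 0 ≤ |(0:ℝ)| * infDist y (W : Set V) := by
      apply mul_nonneg (abs_nonneg _) infDist_nonneg
    linarith
  · have hcpos : 0 < |c| := abs_pos.mpr hc
    have hde : 0 < ε / |c| := div_pos hε hcpos
    obtain ⟨wy, hwy, hdy⟩ := (infDist_lt_iff hne).mp
      (show infDist y (W : Set V) < infDist y (W : Set V) + ε/|c| by linarith)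
    have h1 : infDist (c • y) (W : Set V) ≤ dist (c • y) (c • wy) :=
      infDist_le_dist_of_mem (W.smul_mem c hwy)
    rw [dist_smul₀] at h1
    have h2 : |c| * dist y wy ≤ |c| * (infDist y (W : Set V) + ε/|c|) :=
      mul_le_mul_of_nonneg_left (le_of_lt hdy) (abs_nonneg c)
    rw [mul_add, mul_div_cancel₀ _ (ne_of_gt hcpos)] at h2
    have h3 : ‖c‖ = |c| := Real.norm_eq_abs c
    rw [h3] at h1
    linarith

lemma infDist_le_norm_sub (W : Submodule ℝ V) (y : V) : infDist y (W : Set V) ≤ ‖y‖ := by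
  simpa using infDist_le_dist_of_mem (x := y) W.zero_mem

/-- Stage claim: grow a subspace `W₀` spanned by `Λ`-vectors until no `Λ`-vector is
within `ρ` of `W` without belonging to `W`, keeping a bounded-representative property. -/
lemma stages_claim [FiniteDimensional ℝ V]
    (L Λ : AddSubgroup V) (hΛ : Λ ≤ L) (ρ : ℝ) (hρ : 0 < ρ) :
    ∀ (k : ℕ) (W₀ : Submodule ℝ V) (c₀ : ℝ),
      finrank ℝ V ≤ finrank ℝ W₀ + k →
      (W₀ : Set V) ⊆ (Submodule.span ℝ ((Λ : Set V) ∩ (W₀ : Set V)) : Set V) →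
      (∀ x ∈ L, ∃ x' ∈ L, x - x' ∈ W₀ ∧ ‖x'‖ ≤ infDist x (W₀ : Set V) + c₀) →
      ∃ W : Submodule ℝ V, W₀ ≤ W ∧
        (W : Set V) ⊆ (Submodule.span ℝ ((Λ : Set V) ∩ (W : Set V)) : Set V) ∧
        (∀ y ∈ Λ, infDist y (W : Set V) ≤ ρ → y ∈ W) ∧
        (∀ x ∈ L, ∃ x' ∈ L, x - x' ∈ W ∧ ‖x'‖ ≤ infDist x (W : Set V) + c₀ + k * ρ) := by
  intro k
  induction k with
  | zero =>
    intro W₀ c₀ hdim hspanW hlift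
    have hW₀top : W₀ = ⊤ := by
      apply Submodule.eq_top_of_finrank_eq
      have h1 : finrank ℝ W₀ ≤ finrank ℝ V := W₀.finrank_le
      omega
    refine ⟨W₀, le_refl _, hspanW, ?_, ?_⟩
    · intro y _ _
      rw [hW₀top]; trivial
    · intro x hx
      obtain ⟨x', hx'L, hx'W, hx'n⟩ := hlift x hx
      exact ⟨x', hx'L, hx'W, by push_cast; linarith⟩
  | succ k ih =>
    intro W₀ c₀ hdim hspanW hlift
    by_cases hcase : ∃ y ∈ Λ, y ∉ W₀ ∧ infDist y (W₀ : Set V) ≤ ρ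
    · obtain ⟨y, hyΛ, hyW₀, hydist⟩ := hcase
      set W₁ : Submodule ℝ V := W₀ ⊔ (ℝ ∙ y) with hW₁def
      have hW₀le : W₀ ≤ W₁ := le_sup_left
      have hyW₁ : y ∈ W₁ := by
        apply (le_sup_right : (ℝ ∙ y) ≤ W₁)
        exact Submodule.mem_span_singleton_self y
      -- invariant (a)
      have hspanW₁ : (W₁ : Set V) ⊆
          (Submodule.span ℝ ((Λ : Set V) ∩ (W₁ : Set V)) : Set V) := by
        intro v hv
        obtain ⟨a, ha, b, hb, hab⟩ := Submodule.mem_sup.mp hv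
        obtain ⟨t, htb⟩ := Submodule.mem_span_singleton.mp hb
        have haspan : a ∈ (Submodule.span ℝ ((Λ : Set V) ∩ (W₁ : Set V)) : Set V) := by
          have h1 := hspanW ha
          have hmono : Submodule.span ℝ ((Λ : Set V) ∩ (W₀ : Set V)) ≤
              Submodule.span ℝ ((Λ : Set V) ∩ (W₁ : Set V)) := by
            apply Submodule.span_mono
            exact Set.inter_subset_inter_right _ hW₀le
          exact hmono h1
        have hbspan : b ∈ (Submodule.span ℝ ((Λ : Set V) ∩ (W₁ : Set V)) : Set V) := by
          rw [← htb]
          apply Submodule.smul_mem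
          apply Submodule.subset_span
          exact ⟨hyΛ, hyW₁⟩
        rw [← hab]
        exact Submodule.add_mem _ haspan hbspan
      -- invariant (c) with c₀ + ρ
      have hlift₁ : ∀ x ∈ L, ∃ x' ∈ L, x - x' ∈ W₁ ∧
          ‖x'‖ ≤ infDist x (W₁ : Set V) + (c₀ + ρ) := by
        intro x hx
        have hne₁ : (W₁ : Set V).Nonempty := ⟨0, W₁.zero_mem⟩
        obtain ⟨w₁, hw₁mem, hw₁d⟩ := (infDist_lt_iff hne₁).mp
          (show infDist x (W₁ : Set V) < infDist x (W₁ : Set V) + ρ/2 by linarith)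
        obtain ⟨a, ha, b, hb, hab⟩ := Submodule.mem_sup.mp hw₁mem
        obtain ⟨t, htb⟩ := Submodule.mem_span_singleton.mp hb
        -- z := x - round t • y
        set z : V := x - (round t) • y with hzdef
        have hzL : z ∈ L := AddSubgroup.sub_mem L hx
          (AddSubgroup.zsmul_mem L (hΛ hyΛ) _)
        have hzdist : infDist z (W₀ : Set V) ≤ infDist x (W₁ : Set V) + ρ := by
          have hsplit : z = (x - t • y) + (t - ((round t : ℤ) : ℝ)) • y := by
            rw [hzdef, ← Int.cast_smul_eq_zsmul ℝ (round t) y, sub_smul]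
            abel
          rw [hsplit]
          have h1 := infDist_add_le_sub W₀ (x - t • y) ((t - ((round t : ℤ) : ℝ)) • y)
          have h2 : infDist (x - t • y) (W₀ : Set V) ≤ dist x w₁ := by
            have : infDist (x - t • y) (W₀ : Set V) ≤ dist (x - t • y) a :=
              infDist_le_dist_of_mem ha
            have heq : dist (x - t • y) a = dist x w₁ := by
              rw [dist_eq_norm, dist_eq_norm, ← hab, ← htb]
              congr 1
              abel
            rw [heq] at this
            exact this
          have h3 : infDist ((t - ((round t : ℤ) : ℝ)) • y) (W₀ : Set V) ≤
              |t - ((round t : ℤ) : ℝ)| * infDist y (W₀ : Set V) := infDist_smul_le _ _ _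
          have h4 : |t - ((round t : ℤ) : ℝ)| ≤ 1/2 := abs_sub_round t
          have h5 : |t - ((round t : ℤ) : ℝ)| * infDist y (W₀ : Set V) ≤ (1/2) * ρ := by
            apply mul_le_mul h4 hydist infDist_nonneg (by norm_num)
          linarith
        obtain ⟨x', hx'L, hx'W₀, hx'n⟩ := hlift z hzL
        refine ⟨x', hx'L, ?_, ?_⟩
        · have : x - x' = (round t) • y + (z - x') := by rw [hzdef]; abel
          rw [this]
          apply W₁.add_mem
          · have : ((round t : ℤ) : ℝ) • y ∈ W₁ := W₁.smul_mem _ hyW₁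
            rwa [Int.cast_smul_eq_zsmul] at this
          · exact hW₀le hx'W₀
        · linarith
      -- dimension decreases
      have hdim₁ : finrank ℝ V ≤ finrank ℝ W₁ + k := by
        have hlt : W₀ < W₁ := lt_of_le_of_ne hW₀le (by
          intro h
          rw [← h] at hyW₁
          exact hyW₀ hyW₁)
        have := Submodule.finrank_lt_finrank_of_lt hlt
        omega
      obtain ⟨W, hW₁le, ha, hb, hc⟩ := ih W₁ (c₀ + ρ) hdim₁ hspanW₁ hlift₁
      refine ⟨W, le_trans hW₀le hW₁le, ha, hb, ?_⟩
      intro x hx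
      obtain ⟨x', h1, h2, h3⟩ := hc x hx
      refine ⟨x', h1, h2, ?_⟩
      push_cast
      push_cast at h3
      linarith
    · push_neg at hcase
      refine ⟨W₀, le_refl _, hspanW, ?_, ?_⟩
      · intro y hy hdist
        by_contra hyW₀
        exact absurd hdist (not_le.mpr (by
          have := hcase y hy hyW₀
          linarith))
      · intro x hx
        obtain ⟨x', h1, h2, h3⟩ := hlift x hx
        refine ⟨x', h1, h2, ?_⟩
        have : (0:ℝ) ≤ (k+1 : ℕ) * ρ := by positivity
        push_cast at this ⊢
        linarith

lemma stages [FiniteDimensional ℝ V]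
    (L Λ : AddSubgroup V) (hΛ : Λ ≤ L) (ρ : ℝ) (hρ : 0 < ρ) :
    ∃ W : Submodule ℝ V,
      (W : Set V) ⊆ (Submodule.span ℝ ((Λ : Set V) ∩ (W : Set V)) : Set V) ∧
      (∀ y ∈ Λ, infDist y (W : Set V) ≤ ρ → y ∈ W) ∧
      (∀ x ∈ L, ∃ x' ∈ L, x - x' ∈ W ∧
        ‖x'‖ ≤ infDist x (W : Set V) + (finrank ℝ V) * ρ) := by
  obtain ⟨W, _, ha, hb, hc⟩ := stages_claim L Λ hΛ ρ hρ (finrank ℝ V) ⊥ 0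
    (by simp)
    (by
      intro v hv
      have : v = 0 := by simpa using hv
      rw [this]
      exact Submodule.zero_mem _)
    (by
      intro x hx
      refine ⟨x, hx, by simp, ?_⟩
      have h0 : infDist x ((⊥ : Submodule ℝ V) : Set V) = ‖x‖ := by
        rw [Submodule.bot_coe, infDist_singleton, dist_zero_right]
      rw [h0]
      simp)
  exact ⟨W, ha, hb, fun x hx => by
    obtain ⟨x', h1, h2, h3⟩ := hc x hx
    exact ⟨x', h1, h2, by linarith⟩⟩

theorem core_lemma : ∀ d : ℕ, ∃ C : ℝ, 1 ≤ C ∧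
    ∀ (V : Type) [NormedAddCommGroup V] [NormedSpace ℝ V] [FiniteDimensional ℝ V],
      finrank ℝ V = d →
      ∀ L : AddSubgroup V, Submodule.span ℝ (L : Set V) = ⊤ →
      (∀ R : ℝ, {x : V | x ∈ L ∧ ‖x‖ ≤ R}.Finite) →
      ∃ w : Fin d → V, (∀ j, w j ∈ L) ∧ LinearIndependent ℝ w ∧
        ∀ x ∈ L, ∃ n : Fin d → ℤ, x = ∑ j, (n j : ℝ) • w j ∧
          ∀ j, |(n j : ℝ)| * ‖w j‖ ≤ C * ‖x‖ := by
  intro d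
  induction d with
  | zero =>
    refine ⟨1, le_refl 1, ?_⟩
    intro V _ _ _ hd L hspan hfin
    haveI : Subsingleton V := finrank_zero_iff.mp hd
    refine ⟨fun j => j.elim0, fun j => j.elim0, linearIndependent_empty_type, ?_⟩
    intro x hx
    refine ⟨fun j => j.elim0, ?_, fun j => j.elim0⟩
    have : x = 0 := Subsingleton.elim x 0
    simp [this]
  | succ d ih =>
    obtain ⟨C', hC'1, hC'⟩ := ih
    have hdpos : (0:ℝ) ≤ (d:ℝ) := Nat.cast_nonneg d
    refine ⟨1 + 5*(d+1)*C', by nlinarith, ?_⟩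
    intro V _ _ _ hd L hspan hfin
    haveI hnt : Nontrivial V := by
      have : 0 < finrank ℝ V := by omega
      exact Module.nontrivial_of_finrank_pos this
    -- a nonzero element of L
    have hx0 : ∃ x₀, x₀ ∈ L ∧ x₀ ≠ 0 := by
      by_contra hcon
      push_neg at hcon
      have hsub : (L : Set V) ⊆ {0} := by
        intro x hx
        simp [hcon x hx]
      have : Submodule.span ℝ (L : Set V) ≤ Submodule.span ℝ ({0} : Set V) :=
        Submodule.span_mono hsub
      rw [hspan, Submodule.span_zero_singleton] at this
      obtain ⟨v, hv⟩ := exists_ne (0 : V)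
      exact hv ((Submodule.mem_bot ℝ).mp (this Submodule.mem_top))
    obtain ⟨x₀, hx₀L, hx₀ne⟩ := hx0
    -- shortest nonzero vector w₁
    have hTfin : {x : V | (x ∈ L ∧ ‖x‖ ≤ ‖x₀‖) ∧ x ≠ 0}.Finite :=
      (hfin ‖x₀‖).subset (fun x hx => hx.1)
    have hTne : {x : V | (x ∈ L ∧ ‖x‖ ≤ ‖x₀‖) ∧ x ≠ 0}.Nonempty :=
      ⟨x₀, ⟨hx₀L, le_refl _⟩, hx₀ne⟩
    obtain ⟨w₁, hw₁T, hw₁min⟩ := Set.exists_min_image _ (fun x => ‖x‖) hTfin hTne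
    obtain ⟨⟨hw₁L, hw₁x₀⟩, hw₁ne⟩ := hw₁T
    have hw₁pos : 0 < ‖w₁‖ := norm_pos_iff.mpr hw₁ne
    have hw₁minall : ∀ y, y ∈ L → y ≠ 0 → ‖w₁‖ ≤ ‖y‖ := by
      intro y hyL hyne
      by_cases hy : ‖y‖ ≤ ‖x₀‖
      · exact hw₁min y ⟨⟨hyL, hy⟩, hyne⟩
      · linarith
    set W₁ : Submodule ℝ V := ℝ ∙ w₁ with hW₁def
    haveI hW₁closed : IsClosed (W₁ : Set V) := Submodule.closed_of_finiteDimensional W₁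
    set L' : AddSubgroup (V ⧸ W₁) := L.map (W₁.mkQ).toAddMonoidHom with hL'def
    have hmemL' : ∀ x, x ∈ L → W₁.mkQ x ∈ L' := by
      intro x hx
      exact AddSubgroup.mem_map.mpr ⟨x, hx, rfl⟩
    -- the lift lemma
    have lift : ∀ z : V ⧸ W₁, z ∈ L' → ∀ ε : ℝ, 0 < ε →
        ∃ x, x ∈ L ∧ W₁.mkQ x = z ∧ ‖x‖ ≤ ‖z‖ + ε + ‖w₁‖/2 := by
      intro z hz ε hε
      obtain ⟨x₁, hx₁L, hx₁z0⟩ := AddSubgroup.mem_map.mp hz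
      have hx₁z : W₁.mkQ x₁ = z := hx₁z0
      obtain ⟨m, hmz, hmnorm⟩ := Submodule.Quotient.norm_mk_lt z hε
      have hdiff : x₁ - m ∈ W₁ := by
        rw [← Submodule.Quotient.eq]
        show W₁.mkQ x₁ = Submodule.Quotient.mk m
        rw [hx₁z]
        exact hmz.symm
      obtain ⟨t, ht⟩ := Submodule.mem_span_singleton.mp hdiff
      refine ⟨x₁ - (round t) • w₁, ?_, ?_, ?_⟩
      · exact AddSubgroup.sub_mem L hx₁L (AddSubgroup.zsmul_mem L hw₁L (round t))
      · have hz0 : W₁.mkQ ((round t) • w₁) = 0 := by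
          rw [Submodule.mkQ_apply, Submodule.Quotient.mk_eq_zero]
          rw [← Int.cast_smul_eq_zsmul ℝ]
          exact W₁.smul_mem _ (Submodule.mem_span_singleton_self w₁)
        rw [map_sub, hz0, sub_zero, hx₁z]
      · have h1 : x₁ = m + t • w₁ := by
          have h2 : x₁ - m = t • w₁ := ht.symm
          rw [← h2]; abel
        have heq : x₁ - (round t) • w₁ = m + (t - ((round t : ℤ) : ℝ)) • w₁ := by
          rw [← Int.cast_smul_eq_zsmul ℝ (round t) w₁, h1, sub_smul]
          abel
        rw [heq]
        have h2 : ‖m + (t - ((round t : ℤ) : ℝ)) • w₁‖ ≤ ‖m‖ + ‖(t - ((round t : ℤ) : ℝ)) • w₁‖ := norm_add_le _ _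
        have h3 : ‖(t - ((round t : ℤ) : ℝ)) • w₁‖ = |t - ((round t : ℤ) : ℝ)| * ‖w₁‖ := by
          rw [norm_smul, Real.norm_eq_abs]
        have h4 : |t - ((round t : ℤ) : ℝ)| ≤ 1/2 := abs_sub_round t
        have h5 : |t - ((round t : ℤ) : ℝ)| * ‖w₁‖ ≤ (1/2) * ‖w₁‖ :=
          mul_le_mul_of_nonneg_right h4 (norm_nonneg _)
        rw [h3] at h2
        linarith
    -- lower bound for nonzero elements of L'
    have lambda1 : ∀ z : V ⧸ W₁, z ∈ L' → z ≠ 0 → ‖w₁‖ ≤ 4 * ‖z‖ := by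
      intro z hz hzne
      obtain ⟨x, hxL, hxz, hxnorm⟩ := lift z hz (‖w₁‖/4) (by linarith)
      have hxne : x ≠ 0 := by
        intro h
        rw [h, map_zero] at hxz
        exact hzne hxz.symm
      have := hw₁minall x hxL hxne
      linarith
    -- recursive data
    have hfinr : FiniteDimensional ℝ (V ⧸ W₁) := inferInstance
    have hdq : finrank ℝ (V ⧸ W₁) = d := by
      have h1 := Submodule.finrank_quotient_add_finrank W₁
      have h2 : finrank ℝ W₁ = 1 := finrank_span_singleton hw₁ne
      omega
    have hspan' : Submodule.span ℝ (L' : Set (V ⧸ W₁)) = ⊤ := by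
      have h1 : (L' : Set (V ⧸ W₁)) = W₁.mkQ '' (L : Set V) := rfl
      rw [h1, ← Submodule.map_span, hspan, Submodule.map_top, Submodule.range_mkQ]
    have hfin' : ∀ R : ℝ, {z : V ⧸ W₁ | z ∈ L' ∧ ‖z‖ ≤ R}.Finite := by
      intro R
      apply Set.Finite.subset ((hfin (R + 1 + ‖w₁‖/2)).image W₁.mkQ)
      intro z ⟨hz, hznorm⟩
      obtain ⟨x, hxL, hxz, hxnorm⟩ := lift z hz 1 one_pos
      exact ⟨x, ⟨hxL, by linarith⟩, hxz⟩
    obtain ⟨w', hw'L, hw'li, hw'dec⟩ := hC' (V ⧸ W₁) hdq L' hspan' hfin'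
    have hw'ne : ∀ j, w' j ≠ 0 := fun j => hw'li.ne_zero j
    -- lift the basis
    have hlifts : ∀ j : Fin d, ∃ x, x ∈ L ∧ W₁.mkQ x = w' j ∧ ‖x‖ ≤ ‖w' j‖ + ‖w₁‖ := by
      intro j
      obtain ⟨x, h1, h2, h3⟩ := lift (w' j) (hw'L j) (‖w₁‖/2) (by linarith)
      exact ⟨x, h1, h2, by linarith⟩
    choose wc hwcL hwcmk hwcnorm using hlifts
    set w : Fin (d+1) → V := Fin.cons w₁ wc with hwdef
    have hwL : ∀ j, w j ∈ L := by
      intro j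
      refine Fin.cases ?_ ?_ j
      · simpa [hwdef] using hw₁L
      · intro i; simpa [hwdef] using hwcL i
    -- decomposition
    have hdec : ∀ x ∈ L, ∃ n : Fin (d+1) → ℤ, x = ∑ j, (n j : ℝ) • w j ∧
        ∀ j, |(n j : ℝ)| * ‖w j‖ ≤ (1 + 5*(d+1)*C') * ‖x‖ := by
      intro x hxL
      obtain ⟨n', hn'eq, hn'bd⟩ := hw'dec (W₁.mkQ x) (hmemL' x hxL)
      have hxnn : (0:ℝ) ≤ ‖x‖ := norm_nonneg x
      have hsL : (∑ j, (n' j : ℝ) • wc j) ∈ L := by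
        apply AddSubgroup.sum_mem
        intro j _
        rw [Int.cast_smul_eq_zsmul ℝ]
        exact AddSubgroup.zsmul_mem L (hwcL j) _
      have hmks : W₁.mkQ (∑ j, (n' j : ℝ) • wc j) = W₁.mkQ x := by
        rw [map_sum, hn'eq]
        exact Finset.sum_congr rfl (fun j _ => by rw [map_smul, hwcmk])
      have hxs : x - (∑ j, (n' j : ℝ) • wc j) ∈ W₁ := by
        rw [← Submodule.Quotient.eq]
        exact hmks.symm
      obtain ⟨t, ht⟩ := Submodule.mem_span_singleton.mp hxs
      -- t is an integer
      have hfract : t = (⌊t⌋ : ℝ) := by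
        by_contra hcon
        have hfne : Int.fract t ≠ 0 := by
          intro h
          apply hcon
          have h2 := Int.fract_add_floor t
          rw [h, zero_add] at h2
          exact h2.symm
        have hy : (Int.fract t) • w₁ ∈ L := by
          have h1 : (Int.fract t) • w₁ = (x - (∑ j, (n' j : ℝ) • wc j)) - ⌊t⌋ • w₁ := by
            rw [← ht, ← Int.cast_smul_eq_zsmul ℝ ⌊t⌋ w₁, ← sub_smul, Int.self_sub_floor]
          rw [h1]
          exact AddSubgroup.sub_mem L (AddSubgroup.sub_mem L hxL hsL)
            (AddSubgroup.zsmul_mem L hw₁L _)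
        have hyne : (Int.fract t) • w₁ ≠ 0 := smul_ne_zero hfne hw₁ne
        have hge := hw₁minall _ hy hyne
        rw [norm_smul, Real.norm_eq_abs, abs_of_nonneg (Int.fract_nonneg t)] at hge
        nlinarith [Int.fract_lt_one t, hw₁pos]
      set n : Fin (d+1) → ℤ := Fin.cons ⌊t⌋ n' with hndef
      have hxeq : x = ∑ j, (n j : ℝ) • w j := by
        rw [Fin.sum_univ_succ]
        have h0 : (n 0 : ℝ) • w 0 = t • w₁ := by
          simp only [hndef, hwdef, Fin.cons_zero]
          rw [← hfract]
        have hsucc : ∀ i : Fin d, (n i.succ : ℝ) • w i.succ = (n' i : ℝ) • wc i := by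
          intro i
          simp only [hndef, hwdef, Fin.cons_succ]
        rw [h0, Finset.sum_congr rfl (fun i _ => hsucc i), ht]
        abel
      refine ⟨n, hxeq, ?_⟩
      -- bounds
      have hbd' : ∀ j : Fin d, |(n' j : ℝ)| * ‖wc j‖ ≤ 5 * C' * ‖x‖ := by
        intro j
        have h1 : |(n' j : ℝ)| * ‖w' j‖ ≤ C' * ‖W₁.mkQ x‖ := hn'bd j
        have h2 : ‖W₁.mkQ x‖ ≤ ‖x‖ := Submodule.Quotient.norm_mk_le W₁ x
        have h3 : ‖w₁‖ ≤ 4 * ‖w' j‖ := lambda1 (w' j) (hw'L j) (hw'ne j)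
        have h4 : ‖wc j‖ ≤ ‖w' j‖ + ‖w₁‖ := hwcnorm j
        have h8 : C' * ‖W₁.mkQ x‖ ≤ C' * ‖x‖ :=
          mul_le_mul_of_nonneg_left h2 (by linarith)
        calc |(n' j : ℝ)| * ‖wc j‖
            ≤ |(n' j : ℝ)| * (‖w' j‖ + ‖w₁‖) :=
              mul_le_mul_of_nonneg_left h4 (abs_nonneg _)
          _ ≤ |(n' j : ℝ)| * (5 * ‖w' j‖) :=
              mul_le_mul_of_nonneg_left (by linarith) (abs_nonneg _)
          _ = 5 * (|(n' j : ℝ)| * ‖w' j‖) := by ring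
          _ ≤ 5 * (C' * ‖W₁.mkQ x‖) := by linarith
          _ ≤ 5 * C' * ‖x‖ := by linarith
      have hCnn : (0:ℝ) ≤ C' := le_trans zero_le_one hC'1
      intro j
      refine Fin.cases ?_ ?_ j
      · -- j = 0
        have h0 : (n 0 : ℝ) • w 0 = x - (∑ j, (n' j : ℝ) • wc j) := by
          simp only [hndef, hwdef, Fin.cons_zero]
          rw [← hfract, ht]
        have h1 : |(n 0 : ℝ)| * ‖w 0‖ = ‖(n 0 : ℝ) • w 0‖ := by
          rw [norm_smul, Real.norm_eq_abs]
        rw [h1, h0]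
        have h2 : ‖x - (∑ j, (n' j : ℝ) • wc j)‖ ≤ ‖x‖ + ‖(∑ j, (n' j : ℝ) • wc j)‖ :=
          norm_sub_le _ _
        have h3 : ‖(∑ j, (n' j : ℝ) • wc j)‖ ≤ ∑ j : Fin d, |(n' j : ℝ)| * ‖wc j‖ := by
          refine le_trans (norm_sum_le _ _) ?_
          apply Finset.sum_le_sum
          intro i _
          rw [norm_smul, Real.norm_eq_abs]
        have h4 : ∑ j : Fin d, |(n' j : ℝ)| * ‖wc j‖ ≤ ∑ _j : Fin d, 5 * C' * ‖x‖ :=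
          Finset.sum_le_sum (fun i _ => hbd' i)
        have h5 : ∑ _j : Fin d, (5 * C' * ‖x‖ : ℝ) = d * (5 * C' * ‖x‖) := by
          rw [Finset.sum_const, Finset.card_univ, Fintype.card_fin, nsmul_eq_mul]
        have key : (1 + 5*((d:ℝ)+1)*C') * ‖x‖
            = ‖x‖ + (d:ℝ)*(5*C'*‖x‖) + 5*C'*‖x‖ := by ring
        have hnn : (0:ℝ) ≤ 5*C'*‖x‖ := by positivity
        rw [h5] at h4
        push_cast
        linarith
      · intro i
        have hwi : w i.succ = wc i := by simp [hwdef]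
        have hni : n i.succ = n' i := by simp [hndef]
        rw [hwi, hni]
        have hb := hbd' i
        have key2 : (1 + 5*((d:ℝ)+1)*C') * ‖x‖
            = 5*C'*‖x‖ + (1 + 5*(d:ℝ)*C')*‖x‖ := by ring
        have hnn2 : (0:ℝ) ≤ (1 + 5*(d:ℝ)*C')*‖x‖ := by positivity
        push_cast
        linarith
    -- linear independence
    have hsub : (L : Set V) ⊆ (Submodule.span ℝ (Set.range w) : Set V) := by
      intro x hx
      obtain ⟨n, hneq, -⟩ := hdec x hx
      rw [hneq]
      apply Submodule.sum_mem
      intro j _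
      exact Submodule.smul_mem _ _ (Submodule.subset_span (Set.mem_range_self j))
    have htop : ⊤ ≤ Submodule.span ℝ (Set.range w) := by
      rw [← hspan]
      rw [Submodule.span_le]
      exact hsub
    have hli : LinearIndependent ℝ w := by
      apply linearIndependent_of_top_le_span_of_card_eq_finrank htop
      rw [Fintype.card_fin, hd]
    exact ⟨w, hwL, hli, hdec⟩



/-- Rank reduction / full rank theorem: a finite subset `U` of a proper symmetric GAP `P`
of rank `r` is contained in a proper symmetric GAP `Q` of rank `r' ≤ r` and size at most
`K_r · |P|` which is spanned by `U`: the (unique, by properness) coefficient vectors of the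
elements of `U` span `ℝ^{r'}`. -/
theorem gap_full_rank (r : ℕ) (hr : 1 ≤ r) :
    ∃ K : ℝ, 0 < K ∧
      ∀ (g : Fin r → ℝ) (N : Fin r → ℕ),
        -- `P = {Σ mᵢ gᵢ : |mᵢ| ≤ Nᵢ}` is proper:
        (∀ m m' : Fin r → ℤ, (∀ i, |m i| ≤ (N i : ℤ)) → (∀ i, |m' i| ≤ (N i : ℤ)) →
          (∑ i, (m i : ℝ) * g i) = (∑ i, (m' i : ℝ) * g i) → m = m') →
        ∀ U : Finset ℝ,
          -- `U ⊆ P`: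
          (∀ u ∈ U, ∃ m : Fin r → ℤ, (∀ i, |m i| ≤ (N i : ℤ)) ∧
            u = ∑ i, (m i : ℝ) * g i) →
          ∃ (r' : ℕ) (g' : Fin r' → ℝ) (N' : Fin r' → ℕ),
            r' ≤ r ∧
            -- `Q = {Σ mᵢ g'ᵢ : |mᵢ| ≤ N'ᵢ}` is proper:
            (∀ m m' : Fin r' → ℤ, (∀ i, |m i| ≤ (N' i : ℤ)) → (∀ i, |m' i| ≤ (N' i : ℤ)) →
              (∑ i, (m i : ℝ) * g' i) = (∑ i, (m' i : ℝ) * g' i) → m = m') ∧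
            -- `|Q| ≤ K_r · |P|`:
            (∏ i, (2 * (N' i : ℝ) + 1)) ≤ K * (∏ i, (2 * (N i : ℝ) + 1)) ∧
            -- `U ⊆ Q`, with coefficient vectors spanning `ℝ^{r'}`:
            ∃ m : ℝ → Fin r' → ℤ,
              (∀ u ∈ U, (∀ i, |m u i| ≤ (N' i : ℤ)) ∧ u = ∑ i, (m u i : ℝ) * g' i) ∧
              Submodule.span ℝ ((fun u => fun i : Fin r' => ((m u i : ℝ))) '' (U : Set ℝ))
                = (⊤ : Submodule ℝ (Fin r' → ℝ)) := by
  -- constants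
  choose Cf hCf using core_lemma
  have hrange_ne : (Finset.range (r+1)).Nonempty := ⟨0, by simp⟩
  set Cm : ℝ := Finset.sup' (Finset.range (r+1)) hrange_ne Cf with hCmdef
  have hCmge : ∀ d : ℕ, d ≤ r → Cf d ≤ Cm := by
    intro d hd
    apply Finset.le_sup'
    simp only [Finset.mem_range]; omega
  have hCm1 : (1:ℝ) ≤ Cm := le_trans (hCf 0).1 (hCmge 0 (by omega))
  set ρ : ℝ := 2*r*Cm + 1 with hρdef
  have hρpos : 0 < ρ := by
    have : (0:ℝ) ≤ 2*r*Cm := by positivity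
    rw [hρdef]; linarith
  set Rb : ℝ := r*Cm + r*ρ with hRbdef
  set kK : ℕ := ⌈Rb⌉₊ with hkKdef
  have hRbkK : Rb ≤ (kK : ℝ) := Nat.le_ceil Rb
  set K : ℝ := ((2*kK+1 : ℕ) : ℝ)^r with hKdef
  refine ⟨K, by positivity, ?_⟩
  intro g N hproper U hU
  -- setup
  have hSm0 : ∀ u : ℝ, ∃ m : Fin r → ℤ,
      u ∈ U → ((∀ i, |m i| ≤ (N i : ℤ)) ∧ u = ∑ i, (m i : ℝ) * g i) := by
    intro u
    by_cases hu : u ∈ U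
    · obtain ⟨m, hm⟩ := hU u hu; exact ⟨m, fun _ => hm⟩
    · exact ⟨0, fun h => absurd h hu⟩
  choose Sm hSm using hSm0
  set Nh : Fin r → ℕ := fun i => max (N i) 1 with hNhdef
  have hNh1 : ∀ i, (1:ℝ) ≤ (Nh i : ℝ) := by
    intro i; rw [hNhdef]; exact_mod_cast Nat.le_max_right (N i) 1
  have hNhpos : ∀ i, (0:ℝ) < (Nh i : ℝ) := fun i => lt_of_lt_of_le one_pos (hNh1 i)
  have hNhne : ∀ i, ((Nh i : ℝ)) ≠ 0 := fun i => ne_of_gt (hNhpos i)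
  have hNNh : ∀ i, (N i : ℝ) ≤ (Nh i : ℝ) := by
    intro i; rw [hNhdef]; exact_mod_cast Nat.le_max_left (N i) 1
  set iota : (Fin r → ℤ) → (Fin r → ℝ) := fun m i => (m i : ℝ) / (Nh i : ℝ) with hiotadef
  set psi : (Fin r → ℝ) →ₗ[ℝ] ℝ :=
    { toFun := fun x => ∑ i, x i * ((Nh i : ℝ) * g i),
      map_add' := by
        intro x y
        simp only [Pi.add_apply, add_mul]
        rw [Finset.sum_add_distrib],
      map_smul' := by
        intro c x
        simp only [Pi.smul_apply, smul_eq_mul, RingHom.id_apply]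
        rw [Finset.mul_sum]
        congr 1; funext i; ring } with hpsidef
  have hpsi_iota : ∀ m : Fin r → ℤ, psi (iota m) = ∑ i, (m i : ℝ) * g i := by
    intro m
    rw [hpsidef]
    simp only [LinearMap.coe_mk, AddHom.coe_mk]
    apply Finset.sum_congr rfl
    intro i _
    rw [hiotadef]
    show (m i : ℝ) / (Nh i : ℝ) * ((Nh i : ℝ) * g i) = (m i : ℝ) * g i
    rw [← mul_assoc, div_mul_cancel₀ _ (hNhne i)]
  set xfun : ℝ → (Fin r → ℝ) := fun u => iota (Sm u) with hxfundef
  set H : Submodule ℝ (Fin r → ℝ) := Submodule.span ℝ (xfun '' (U : Set ℝ)) with hHdef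
  have hgen : ∀ u ∈ U, xfun u ∈ H := fun u hu => Submodule.subset_span ⟨u, hu, rfl⟩
  set d : ℕ := finrank ℝ ↥H with hddef
  have hdr : d ≤ r := by
    have h1 : finrank ℝ ↥H ≤ finrank ℝ (Fin r → ℝ) := H.finrank_le
    have h2 : finrank ℝ (Fin r → ℝ) = r := by
      rw [Module.finrank_pi]; simp
    omega
  -- the lattice L inside H
  have hiota_add : ∀ m m' : Fin r → ℤ, iota (m + m') = iota m + iota m' := by
    intro m m'; funext i; rw [hiotadef]; simp only [Pi.add_apply]
    push_cast; ring
  have hiota_neg : ∀ m : Fin r → ℤ, iota (-m) = - iota m := by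
    intro m; funext i; rw [hiotadef]; simp only [Pi.neg_apply]
    push_cast; ring
  set L : AddSubgroup ↥H :=
    { carrier := {x : ↥H | ∃ m : Fin r → ℤ, iota m = (x : Fin r → ℝ)},
      add_mem' := by
        rintro a b ⟨ma, hma⟩ ⟨mb, hmb⟩
        exact ⟨ma + mb, by rw [hiota_add, hma, hmb]; rfl⟩,
      zero_mem' := ⟨0, by funext i; rw [hiotadef]; simp⟩,
      neg_mem' := by
        rintro a ⟨ma, hma⟩
        exact ⟨-ma, by rw [hiota_neg, hma]; rfl⟩ } with hLdef
  have hmemL : ∀ (x : ↥H), x ∈ L ↔ ∃ m : Fin r → ℤ, iota m = (x : Fin r → ℝ) := fun x => Iff.rfl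
  -- iota coordinates bound by norm
  have hcoord : ∀ (x : ↥H) (m : Fin r → ℤ), iota m = (x : Fin r → ℝ) →
      ∀ i, |(m i : ℝ)| ≤ ‖x‖ * (Nh i : ℝ) := by
    intro x m hm i
    have h1 : |((x : Fin r → ℝ)) i| ≤ ‖x‖ := by
      have h2 := norm_le_pi_norm (x : Fin r → ℝ) i
      rw [Real.norm_eq_abs] at h2
      rw [Submodule.coe_norm]
      exact h2
    have h3 : ((x : Fin r → ℝ)) i = (m i : ℝ) / (Nh i : ℝ) := by
      rw [← hm]
    have h4 : |(m i : ℝ)| / (Nh i : ℝ) ≤ ‖x‖ := by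
      rw [← abs_of_pos (hNhpos i), ← abs_div, ← h3]
      exact h1
    calc |(m i : ℝ)| = (|(m i : ℝ)| / (Nh i : ℝ)) * (Nh i : ℝ) := by
          rw [div_mul_cancel₀ _ (hNhne i)]
      _ ≤ ‖x‖ * (Nh i : ℝ) := mul_le_mul_of_nonneg_right h4 (le_of_lt (hNhpos i))
  -- finiteness
  have hfinL : ∀ R : ℝ, {x : ↥H | x ∈ L ∧ ‖x‖ ≤ R}.Finite := by
    intro R
    set B : Finset (Fin r → ℤ) :=
      Fintype.piFinset (fun i => Finset.Icc (-(⌈|R|⌉₊ * Nh i : ℤ)) (⌈|R|⌉₊ * Nh i)) with hBdef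
    have himg : Set.Finite (Subtype.val ⁻¹' (iota '' (B : Set (Fin r → ℤ))) : Set ↥H) := by
      apply Set.Finite.preimage (Set.injOn_of_injective Subtype.coe_injective)
      exact Set.Finite.image _ (Finset.finite_toSet B)
    apply Set.Finite.subset himg
    rintro x ⟨⟨m, hm⟩, hxR⟩
    refine ⟨m, ?_, hm⟩
    rw [Finset.mem_coe, hBdef, Fintype.mem_piFinset]
    intro i
    rw [Finset.mem_Icc]
    have h1 := hcoord x m hm i
    have h2 : ‖x‖ * (Nh i : ℝ) ≤ (⌈|R|⌉₊ : ℝ) * (Nh i : ℝ) := by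
      apply mul_le_mul_of_nonneg_right _ (le_of_lt (hNhpos i))
      calc ‖x‖ ≤ R := hxR
        _ ≤ |R| := le_abs_self R
        _ ≤ (⌈|R|⌉₊ : ℝ) := Nat.le_ceil _
    have h3 : |(m i : ℝ)| ≤ ((⌈|R|⌉₊ * Nh i : ℤ) : ℝ) := by push_cast; linarith
    rw [← Int.cast_abs, Int.cast_le] at h3
    exact abs_le.mp h3
  -- spanning
  have hspanX : ∀ v : ↥H, v ∈ Submodule.span ℝ
      ({w : ↥H | ∃ u ∈ U, (w : Fin r → ℝ) = xfun u} : Set ↥H) := by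
    intro v
    have hv : (v : Fin r → ℝ) ∈ Submodule.span ℝ (xfun '' (U : Set ℝ)) := v.2
    have key : ∀ (x : Fin r → ℝ) (hx : x ∈ Submodule.span ℝ (xfun '' (U : Set ℝ))),
        ∀ hmem : x ∈ H, (⟨x, hmem⟩ : ↥H) ∈ Submodule.span ℝ
          ({w : ↥H | ∃ u ∈ U, (w : Fin r → ℝ) = xfun u} : Set ↥H) := by
      intro x hx
      refine Submodule.span_induction ?_ ?_ ?_ ?_ hx
      · rintro y ⟨u, hu, rfl⟩ hmem
        exact Submodule.subset_span ⟨u, hu, rfl⟩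
      · intro hmem
        have h0 : (⟨0, hmem⟩ : ↥H) = 0 := rfl
        rw [h0]; exact Submodule.zero_mem _
      · intro a b ha hb hpa hpb hmem
        have hamem : a ∈ H := ha
        have hbmem : b ∈ H := hb
        have hsum : (⟨a + b, hmem⟩ : ↥H) = ⟨a, hamem⟩ + ⟨b, hbmem⟩ := rfl
        rw [hsum]
        exact Submodule.add_mem _ (hpa hamem) (hpb hbmem)
      · intro c x hx hp hmem
        have hxmem : x ∈ H := hx
        have hsm : (⟨c • x, hmem⟩ : ↥H) = c • (⟨x, hxmem⟩ : ↥H) := rfl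
        rw [hsm]
        exact Submodule.smul_mem _ _ (hp hxmem)
    have h := key (v : Fin r → ℝ) hv v.2
    have hveq : (⟨(v : Fin r → ℝ), v.2⟩ : ↥H) = v := rfl
    rwa [hveq] at h
  have hspanL : Submodule.span ℝ (L : Set ↥H) = ⊤ := by
    rw [eq_top_iff]
    intro v _
    have h1 := hspanX v
    have h2 : ({w : ↥H | ∃ u ∈ U, (w : Fin r → ℝ) = xfun u} : Set ↥H) ⊆ (L : Set ↥H) := by
      rintro w ⟨u, hu, hw⟩
      exact ⟨Sm u, hw.symm⟩
    exact Submodule.span_mono h2 h1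
  -- relations subgroup
  set psiH : ↥H →ₗ[ℝ] ℝ := psi.comp H.subtype with hpsiHdef
  set Λ : AddSubgroup ↥H := L ⊓ (AddMonoidHom.ker psiH.toAddMonoidHom) with hΛdef
  have hΛL : Λ ≤ L := inf_le_left
  -- stages
  obtain ⟨W, hWa, hWb, hWc⟩ := stages L Λ hΛL ρ hρpos
  have hWker : ∀ x ∈ W, psiH x = 0 := by
    intro x hx
    have h2 : Submodule.span ℝ ((Λ : Set ↥H) ∩ (W : Set ↥H)) ≤ LinearMap.ker psiH := by
      rw [Submodule.span_le]
      rintro z ⟨hzΛ, -⟩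
      exact LinearMap.mem_ker.mpr (AddMonoidHom.mem_ker.mp hzΛ.2)
    exact LinearMap.mem_ker.mp (h2 (hWa hx))
  haveI hWclosed : IsClosed (W : Set ↥H) := Submodule.closed_of_finiteDimensional W
  -- quotient
  set d2 : ℕ := finrank ℝ (↥H ⧸ W) with hd2def
  have hd2r : d2 ≤ r := le_trans (Submodule.finrank_quotient_le W) (hddef ▸ hdr)
  have hnorm_mk : ∀ x : ↥H, ‖(Submodule.Quotient.mk x : ↥H ⧸ W)‖ = infDist x (W : Set ↥H) := by
    intro x
    exact QuotientAddGroup.norm_mk x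
  set L2 : AddSubgroup (↥H ⧸ W) := L.map W.mkQ.toAddMonoidHom with hL2def
  have hspanL2 : Submodule.span ℝ (L2 : Set (↥H ⧸ W)) = ⊤ := by
    have h1 : (L2 : Set (↥H ⧸ W)) = W.mkQ '' (L : Set ↥H) := rfl
    rw [h1, ← Submodule.map_span, hspanL, Submodule.map_top, Submodule.range_mkQ]
  have hfinL2 : ∀ R : ℝ, {z : ↥H ⧸ W | z ∈ L2 ∧ ‖z‖ ≤ R}.Finite := by
    intro R
    apply Set.Finite.subset ((hfinL (R + (finrank ℝ ↥H) * ρ)).image W.mkQ)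
    rintro z ⟨hz, hzR⟩
    obtain ⟨x, hxL, hmk0⟩ := AddSubgroup.mem_map.mp hz
    have hmk : W.mkQ x = z := hmk0
    obtain ⟨x', hx'L, hx'W, hx'n⟩ := hWc x hxL
    have hdist : infDist x (W : Set ↥H) = ‖z‖ := by
      rw [← hnorm_mk x]
      rw [show (Submodule.Quotient.mk x : ↥H ⧸ W) = W.mkQ x from rfl, hmk]
    refine ⟨x', ⟨hx'L, by rw [hdist] at hx'n; linarith⟩, ?_⟩
    have h0 : W.mkQ (x - x') = 0 := by
      rw [show W.mkQ (x - x') = Submodule.Quotient.mk (x - x') from rfl,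
        Submodule.Quotient.mk_eq_zero]
      exact hx'W
    rw [map_sub, sub_eq_zero] at h0
    rw [← h0, hmk]
  obtain ⟨w', hw'L2, hw'li, hw'dec⟩ := (hCf d2).2 (↥H ⧸ W) rfl L2 hspanL2 hfinL2
  have hw'pos : ∀ j, 0 < ‖w' j‖ := fun j => norm_pos_iff.mpr (hw'li.ne_zero j)
  have hlifts : ∀ j, ∃ x : ↥H, x ∈ L ∧ W.mkQ x = w' j := by
    intro j
    obtain ⟨x, hx, hmk⟩ := AddSubgroup.mem_map.mp (hw'L2 j)
    exact ⟨x, hx, hmk⟩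
  choose wc hwcL hwcmk using hlifts
  set g' : Fin d2 → ℝ := fun j => psiH (wc j) with hg'def
  set N' : Fin d2 → ℕ := fun j => ⌊Cf d2 / ‖w' j‖⌋₊ with hN'def
  have hN'mul : ∀ j, (N' j : ℝ) * ‖w' j‖ ≤ Cf d2 := by
    intro j
    have h1 : (N' j : ℝ) ≤ Cf d2 / ‖w' j‖ := by
      rw [hN'def]
      exact Nat.floor_le (div_nonneg (le_trans zero_le_one (hCf d2).1) (norm_nonneg _))
    calc (N' j : ℝ) * ‖w' j‖ ≤ (Cf d2 / ‖w' j‖) * ‖w' j‖ :=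
          mul_le_mul_of_nonneg_right h1 (norm_nonneg _)
      _ = Cf d2 := div_mul_cancel₀ _ (ne_of_gt (hw'pos j))
  -- facts about integer combinations
  have hcomb : ∀ Δ : Fin d2 → ℤ, (∑ j, (Δ j : ℝ) • wc j) ∈ L ∧
      W.mkQ (∑ j, (Δ j : ℝ) • wc j) = ∑ j, (Δ j : ℝ) • w' j ∧
      psiH (∑ j, (Δ j : ℝ) • wc j) = ∑ j, (Δ j : ℝ) * g' j := by
    intro Δ
    refine ⟨?_, ?_, ?_⟩
    · apply AddSubgroup.sum_mem
      intro j _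
      have h := AddSubgroup.zsmul_mem L (hwcL j) (Δ j)
      rwa [← Int.cast_smul_eq_zsmul ℝ] at h
    · rw [map_sum]
      exact Finset.sum_congr rfl (fun j _ => by rw [map_smul, hwcmk])
    · rw [map_sum]
      apply Finset.sum_congr rfl
      intro j _
      rw [map_smul, smul_eq_mul]
  -- the key injectivity fact
  have hkey : ∀ Δ : Fin d2 → ℤ, (∀ j, |Δ j| ≤ 2 * (N' j : ℤ)) →
      (∑ j, (Δ j : ℝ) * g' j) = 0 → Δ = 0 := by
    intro Δ hΔ hsum
    obtain ⟨hyL, hymk, hypsi⟩ := hcomb Δ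
    have hyΛ : (∑ j, (Δ j : ℝ) • wc j) ∈ Λ := by
      refine ⟨hyL, ?_⟩
      apply AddMonoidHom.mem_ker.mpr
      show psiH (∑ j, (Δ j : ℝ) • wc j) = 0
      rw [hypsi, hsum]
    have hnormy : ‖W.mkQ (∑ j, (Δ j : ℝ) • wc j)‖ ≤ 2 * r * Cm := by
      rw [hymk]
      have step1 : ‖∑ j, (Δ j : ℝ) • w' j‖ ≤ ∑ j, |(Δ j : ℝ)| * ‖w' j‖ := by
        refine le_trans (norm_sum_le _ _) ?_
        apply Finset.sum_le_sum
        intro j _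
        rw [norm_smul, Real.norm_eq_abs]
      have step2 : ∀ j, |(Δ j : ℝ)| * ‖w' j‖ ≤ 2 * Cf d2 := by
        intro j
        have h1 : |(Δ j : ℝ)| ≤ 2 * (N' j : ℝ) := by
          have := hΔ j
          calc |(Δ j : ℝ)| = ((|Δ j| : ℤ) : ℝ) := by push_cast; rfl
            _ ≤ ((2 * (N' j : ℤ) : ℤ) : ℝ) := by exact_mod_cast this
            _ = 2 * (N' j : ℝ) := by push_cast; ring
        calc |(Δ j : ℝ)| * ‖w' j‖ ≤ (2 * (N' j : ℝ)) * ‖w' j‖ :=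
              mul_le_mul_of_nonneg_right h1 (norm_nonneg _)
          _ = 2 * ((N' j : ℝ) * ‖w' j‖) := by ring
          _ ≤ 2 * Cf d2 := by linarith [hN'mul j]
      have step3 : ∑ j : Fin d2, |(Δ j : ℝ)| * ‖w' j‖ ≤ ∑ _j : Fin d2, 2 * Cf d2 :=
        Finset.sum_le_sum (fun j _ => step2 j)
      have step4 : ∑ _j : Fin d2, (2 * Cf d2 : ℝ) = d2 * (2 * Cf d2) := by
        rw [Finset.sum_const, Finset.card_univ, Fintype.card_fin, nsmul_eq_mul]
      have step5 : (d2 : ℝ) * (2 * Cf d2) ≤ (r : ℝ) * (2 * Cm) := by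
        have hc1 : Cf d2 ≤ Cm := hCmge d2 hd2r
        have hc0 : (0:ℝ) ≤ Cf d2 := le_trans zero_le_one (hCf d2).1
        have hd2c : (d2 : ℝ) ≤ (r : ℝ) := by exact_mod_cast hd2r
        have hrc : (0:ℝ) ≤ (r:ℝ) := Nat.cast_nonneg r
        nlinarith
      rw [step4] at step3
      have : (r:ℝ) * (2*Cm) = 2*r*Cm := by ring
      linarith
    have hdisty : infDist (∑ j, (Δ j : ℝ) • wc j) (W : Set ↥H) ≤ ρ := by
      rw [← hnorm_mk]
      rw [show (Submodule.Quotient.mk (∑ j, (Δ j : ℝ) • wc j) : ↥H ⧸ W)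
        = W.mkQ (∑ j, (Δ j : ℝ) • wc j) from rfl]
      rw [hρdef]
      linarith
    have hyW : (∑ j, (Δ j : ℝ) • wc j) ∈ W := hWb _ hyΛ hdisty
    have h0 : (∑ j, (Δ j : ℝ) • w' j) = 0 := by
      rw [← hymk]
      rw [show W.mkQ (∑ j, (Δ j : ℝ) • wc j)
        = Submodule.Quotient.mk (∑ j, (Δ j : ℝ) • wc j) from rfl]
      rw [Submodule.Quotient.mk_eq_zero]
      exact hyW
    have hz := linearIndependent_iff'.mp hw'li Finset.univ (fun j => (Δ j : ℝ)) h0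
    funext j
    have hzj := hz j (Finset.mem_univ j)
    have : Δ j = 0 := by exact_mod_cast hzj
    simpa using this
  -- decomposition of elements of U
  have hdecU : ∀ u ∈ U, ∃ n : Fin d2 → ℤ, (∀ j, |n j| ≤ (N' j : ℤ)) ∧
      (u = ∑ j, (n j : ℝ) * g' j) ∧
      (∀ (hx : xfun u ∈ H), W.mkQ (⟨xfun u, hx⟩ : ↥H) = ∑ j, (n j : ℝ) • w' j) := by
    intro u hu
    have hxH : xfun u ∈ H := hgen u hu
    have hxuL : (⟨xfun u, hxH⟩ : ↥H) ∈ L := ⟨Sm u, rfl⟩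
    have hxu1 : ‖(⟨xfun u, hxH⟩ : ↥H)‖ ≤ 1 := by
      rw [Submodule.coe_norm]
      rw [pi_norm_le_iff_of_nonneg (zero_le_one)]
      intro i
      rw [Real.norm_eq_abs]
      show |(Sm u i : ℝ) / (Nh i : ℝ)| ≤ 1
      rw [abs_div, abs_of_pos (hNhpos i), div_le_one (hNhpos i)]
      have h1 : |Sm u i| ≤ (N i : ℤ) := ((hSm u) hu).1 i
      have h2 : |(Sm u i : ℝ)| ≤ (N i : ℝ) := by exact_mod_cast h1
      linarith [hNNh i]
    have hmem2 : W.mkQ (⟨xfun u, hxH⟩ : ↥H) ∈ L2 :=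
      AddSubgroup.mem_map.mpr ⟨_, hxuL, rfl⟩
    obtain ⟨n, hneq, hnbd⟩ := hw'dec (W.mkQ (⟨xfun u, hxH⟩ : ↥H)) hmem2
    have hnb : ∀ j, |n j| ≤ (N' j : ℤ) := by
      intro j
      have h1 := hnbd j
      have h2 : ‖W.mkQ (⟨xfun u, hxH⟩ : ↥H)‖ ≤ ‖(⟨xfun u, hxH⟩ : ↥H)‖ :=
        Submodule.Quotient.norm_mk_le W _
      have hc0 : (0:ℝ) ≤ Cf d2 := le_trans zero_le_one (hCf d2).1
      have h3 : |(n j : ℝ)| ≤ Cf d2 / ‖w' j‖ := by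
        rw [le_div_iff₀ (hw'pos j)]
        calc |(n j : ℝ)| * ‖w' j‖ ≤ Cf d2 * ‖W.mkQ (⟨xfun u, hxH⟩ : ↥H)‖ := h1
          _ ≤ Cf d2 * 1 := mul_le_mul_of_nonneg_left (le_trans h2 hxu1) hc0
          _ = Cf d2 := mul_one _
      have h4 : (n j).natAbs ≤ N' j := by
        rw [hN'def]
        apply Nat.le_floor
        rw [show (((n j).natAbs : ℕ) : ℝ) = |(n j : ℝ)| by push_cast [Nat.cast_natAbs]; simp]
        exact h3
      have h5 : |n j| = ((n j).natAbs : ℤ) := Int.abs_eq_natAbs _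
      rw [h5]
      exact_mod_cast h4
    have hpsixu : psiH (⟨xfun u, hxH⟩ : ↥H) = u := by
      show psi (xfun u) = u
      rw [hxfundef]
      rw [hpsi_iota]
      exact ((hSm u) hu).2.symm
    have hdiffW : (⟨xfun u, hxH⟩ : ↥H) - (∑ j, (n j : ℝ) • wc j) ∈ W := by
      rw [← Submodule.Quotient.eq]
      show W.mkQ (⟨xfun u, hxH⟩ : ↥H) = W.mkQ (∑ j, (n j : ℝ) • wc j)
      rw [(hcomb n).2.1, ← hneq]
    have hval : u = ∑ j, (n j : ℝ) * g' j := by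
      have h5 : psiH ((⟨xfun u, hxH⟩ : ↥H) - ∑ j, (n j : ℝ) • wc j) = 0 := hWker _ hdiffW
      rw [map_sub, sub_eq_zero] at h5
      rw [← hpsixu, h5, (hcomb n).2.2]
    refine ⟨n, hnb, hval, ?_⟩
    intro hx
    exact hneq
  classical
  set mfun : ℝ → Fin d2 → ℤ := fun u =>
    if hu : u ∈ U then (hdecU u hu).choose else 0 with hmfundef
  have hmfun : ∀ u (hu : u ∈ U), (∀ j, |mfun u j| ≤ (N' j : ℤ)) ∧
      (u = ∑ j, (mfun u j : ℝ) * g' j) ∧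
      (∀ (hx : xfun u ∈ H), W.mkQ (⟨xfun u, hx⟩ : ↥H) = ∑ j, (mfun u j : ℝ) • w' j) := by
    intro u hu
    rw [hmfundef]
    simp only [dif_pos hu]
    exact (hdecU u hu).choose_spec
  refine ⟨d2, g', N', hd2r, ?_, ?_, mfun, ?_, ?_⟩
  · -- properness of Q
    intro m₁ m₂ hb₁ hb₂ hsum
    have hΔ : ∀ j, |m₁ j - m₂ j| ≤ 2 * (N' j : ℤ) := by
      intro j
      have := abs_sub (m₁ j) (m₂ j)
      have h1 := hb₁ j; have h2 := hb₂ j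
      omega
    have hsum0 : (∑ j, ((m₁ j - m₂ j : ℤ) : ℝ) * g' j) = 0 := by
      push_cast
      simp only [sub_mul]
      rw [Finset.sum_sub_distrib, hsum, sub_self]
    have := hkey (fun j => m₁ j - m₂ j) hΔ hsum0
    funext j
    have := congrFun this j
    simpa [sub_eq_zero] using this
  · -- size bound
    set F : (Fin d2 → ℤ) → ℝ := fun Δ => ∑ j, (Δ j : ℝ) * g' j with hFdef
    set BoxN : Finset (Fin d2 → ℤ) :=
      Fintype.piFinset (fun j => Finset.Icc (-(N' j : ℤ)) (N' j)) with hBoxdef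
    have hmemBox : ∀ (c : Fin d2 → ℤ), c ∈ BoxN → ∀ j, |c j| ≤ (N' j : ℤ) := by
      intro c hc j
      rw [hBoxdef, Fintype.mem_piFinset] at hc
      have h := hc j
      rw [Finset.mem_Icc] at h
      exact abs_le.mpr h
    have hinj : Set.InjOn F (BoxN : Set (Fin d2 → ℤ)) := by
      intro a ha b hb hab
      have hdiff : ∀ j, |a j - b j| ≤ 2 * (N' j : ℤ) := by
        intro j
        have h1 := abs_le.mp (hmemBox a ha j); have h2 := abs_le.mp (hmemBox b hb j)
        have h3 : |a j - b j| ≤ |a j| + |b j| := by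
          rw [sub_eq_add_neg]
          refine le_trans (abs_add_le _ _) ?_
          rw [abs_neg]
        have h4 := abs_le.mp (hmemBox a ha j)
        refine abs_le.mpr ?_
        constructor <;> [linarith [h1.1, h2.2]; linarith [h1.2, h2.1]]
      have hab' : (∑ j, (a j : ℝ) * g' j) = ∑ j, (b j : ℝ) * g' j := hab
      have hsum0 : (∑ j, ((a j - b j : ℤ) : ℝ) * g' j) = 0 := by
        push_cast
        simp only [sub_mul]
        rw [Finset.sum_sub_distrib]
        rw [show (∑ j, (a j : ℝ) * g' j) = ∑ j, (b j : ℝ) * g' j from hab', sub_self]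
      have h0 := hkey (fun j => a j - b j) hdiff hsum0
      funext j
      have := congrFun h0 j
      simp only [Pi.zero_apply] at this
      omega
    have hcard1 : (BoxN.image F).card = BoxN.card := Finset.card_image_of_injOn hinj
    have hcardBox : BoxN.card = ∏ j : Fin d2, (2 * N' j + 1) := by
      rw [hBoxdef, Fintype.card_piFinset]
      apply Finset.prod_congr rfl
      intro j _
      rw [Int.card_Icc]
      omega
    set BigBox : Finset (Fin r → ℤ) :=
      Fintype.piFinset (fun i => Finset.Icc (-((kK * Nh i : ℕ) : ℤ)) ((kK * Nh i : ℕ) : ℤ))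
      with hBigdef
    have hsubimg : BoxN.image F ⊆ BigBox.image (fun mm : Fin r → ℤ => ∑ i, (mm i : ℝ) * g i) := by
      intro v hv
      obtain ⟨Δ, hΔBox, rfl⟩ := Finset.mem_image.mp hv
      obtain ⟨hyL, hymk, hypsi⟩ := hcomb Δ
      have hnormy : ‖W.mkQ (∑ j, (Δ j : ℝ) • wc j)‖ ≤ r * Cm := by
        rw [hymk]
        have step1 : ‖∑ j, (Δ j : ℝ) • w' j‖ ≤ ∑ j, |(Δ j : ℝ)| * ‖w' j‖ := by
          refine le_trans (norm_sum_le _ _) ?_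
          apply Finset.sum_le_sum
          intro j _
          rw [norm_smul, Real.norm_eq_abs]
        have step2 : ∀ j, |(Δ j : ℝ)| * ‖w' j‖ ≤ Cf d2 := by
          intro j
          have h1 : |(Δ j : ℝ)| ≤ (N' j : ℝ) := by
            have := hmemBox Δ hΔBox j
            calc |(Δ j : ℝ)| = ((|Δ j| : ℤ) : ℝ) := by push_cast; rfl
              _ ≤ (((N' j : ℤ) : ℤ) : ℝ) := by exact_mod_cast this
              _ = (N' j : ℝ) := by push_cast; ring
          calc |(Δ j : ℝ)| * ‖w' j‖ ≤ (N' j : ℝ) * ‖w' j‖ :=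
                mul_le_mul_of_nonneg_right h1 (norm_nonneg _)
            _ ≤ Cf d2 := hN'mul j
        have step3 : ∑ j : Fin d2, |(Δ j : ℝ)| * ‖w' j‖ ≤ ∑ _j : Fin d2, Cf d2 :=
          Finset.sum_le_sum (fun j _ => step2 j)
        have step4 : ∑ _j : Fin d2, (Cf d2 : ℝ) = d2 * Cf d2 := by
          rw [Finset.sum_const, Finset.card_univ, Fintype.card_fin, nsmul_eq_mul]
        have step5 : (d2 : ℝ) * Cf d2 ≤ (r : ℝ) * Cm := by
          have hc1 : Cf d2 ≤ Cm := hCmge d2 hd2r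
          have hc0 : (0:ℝ) ≤ Cf d2 := le_trans zero_le_one (hCf d2).1
          have hd2c : (d2 : ℝ) ≤ (r : ℝ) := by exact_mod_cast hd2r
          have hrc : (0:ℝ) ≤ (r:ℝ) := Nat.cast_nonneg r
          nlinarith
        rw [step4] at step3
        linarith
      obtain ⟨x', hx'L, hx'W, hx'n⟩ := hWc _ hyL
      have hx'bound : ‖x'‖ ≤ (kK : ℝ) := by
        have hdist : infDist (∑ j, (Δ j : ℝ) • wc j) (W : Set ↥H)
            = ‖W.mkQ (∑ j, (Δ j : ℝ) • wc j)‖ := by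
          rw [← hnorm_mk]
          rfl
        have hfr : ((finrank ℝ ↥H : ℕ) : ℝ) ≤ (r:ℝ) := by
          exact_mod_cast (hddef ▸ hdr : finrank ℝ ↥H ≤ r)
        have hρnn : (0:ℝ) ≤ ρ := le_of_lt hρpos
        have h6 : ((finrank ℝ ↥H : ℕ) : ℝ) * ρ ≤ (r:ℝ) * ρ :=
          mul_le_mul_of_nonneg_right hfr hρnn
        have h7 : ‖x'‖ ≤ r * Cm + r * ρ := by
          rw [hdist] at hx'n
          linarith
        calc ‖x'‖ ≤ Rb := by rw [hRbdef]; exact h7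
          _ ≤ (kK : ℝ) := hRbkK
      obtain ⟨m', hm'⟩ := hx'L
      have hvalx : F Δ = ∑ i, (m' i : ℝ) * g i := by
        have h1 : psiH (∑ j, (Δ j : ℝ) • wc j) = F Δ := hypsi
        have h2 : psiH (∑ j, (Δ j : ℝ) • wc j) = psiH x' := by
          have h3 : psiH ((∑ j, (Δ j : ℝ) • wc j) - x') = 0 := hWker _ hx'W
          rw [map_sub, sub_eq_zero] at h3
          exact h3
        have h4 : psiH x' = ∑ i, (m' i : ℝ) * g i := by
          show psi ((x' : Fin r → ℝ)) = _
          rw [← hm', hpsi_iota]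
        rw [← h1, h2, h4]
      apply Finset.mem_image.mpr
      refine ⟨m', ?_, hvalx.symm⟩
      rw [hBigdef, Fintype.mem_piFinset]
      intro i
      rw [Finset.mem_Icc]
      have h8 := hcoord x' m' hm' i
      have h9 : ‖x'‖ * (Nh i : ℝ) ≤ (kK : ℝ) * (Nh i : ℝ) :=
        mul_le_mul_of_nonneg_right hx'bound (le_of_lt (hNhpos i))
      have h10 : |(m' i : ℝ)| ≤ (((kK * Nh i : ℕ) : ℤ) : ℝ) := by
        push_cast
        linarith
      rw [← Int.cast_abs, Int.cast_le] at h10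
      exact abs_le.mp h10
    have hcard2 : (BoxN.image F).card ≤ BigBox.card :=
      le_trans (Finset.card_le_card hsubimg) Finset.card_image_le
    have hcardBig : BigBox.card = ∏ i : Fin r, (2 * (kK * Nh i) + 1) := by
      rw [hBigdef, Fintype.card_piFinset]
      apply Finset.prod_congr rfl
      intro i _
      rw [Int.card_Icc]
      omega
    have hchain : (∏ j : Fin d2, (2 * (N' j : ℝ) + 1)) ≤ ((BigBox.card : ℕ) : ℝ) := by
      have he : (∏ j : Fin d2, (2 * (N' j : ℝ) + 1)) = ((BoxN.card : ℕ) : ℝ) := by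
        rw [hcardBox]
        push_cast
        ring
      rw [he, ← hcard1]
      exact_mod_cast hcard2
    have hfac : ∀ i : Fin r, ((2 * (kK * Nh i) + 1 : ℕ) : ℝ)
        ≤ ((2*kK+1 : ℕ):ℝ) * (2 * (N i:ℝ) + 1) := by
      intro i
      by_cases hNi : N i = 0
      · have hNh1' : Nh i = 1 := by rw [hNhdef]; simp [hNi]
        rw [hNh1', hNi]
        push_cast
        ring_nf
        norm_num
      · have hN1 : 1 ≤ N i := Nat.one_le_iff_ne_zero.mpr hNi
        have hNheq : Nh i = N i := by rw [hNhdef]; exact max_eq_left hN1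
        rw [hNheq]
        have hN1R : (1:ℝ) ≤ (N i : ℝ) := by exact_mod_cast hN1
        have hkR : (0:ℝ) ≤ (kK : ℝ) := Nat.cast_nonneg kK
        push_cast
        nlinarith
    calc (∏ j : Fin d2, (2 * (N' j : ℝ) + 1)) ≤ ((BigBox.card : ℕ) : ℝ) := hchain
      _ = ∏ i : Fin r, ((2 * (kK * Nh i) + 1 : ℕ) : ℝ) := by
          rw [hcardBig]; push_cast; ring
      _ ≤ ∏ i : Fin r, (((2*kK+1 : ℕ):ℝ) * (2 * (N i:ℝ) + 1)) := by
          apply Finset.prod_le_prod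
          · intro i _; positivity
          · intro i _; exact hfac i
      _ = K * (∏ i, (2 * (N i : ℝ) + 1)) := by
          rw [Finset.prod_mul_distrib, Finset.prod_const, Finset.card_univ,
            Fintype.card_fin, hKdef]
  · -- membership
    intro u hu
    exact ⟨(hmfun u hu).1, (hmfun u hu).2.1⟩
  · -- span
    set T : (Fin d2 → ℝ) →ₗ[ℝ] (↥H ⧸ W) :=
      { toFun := fun c => ∑ j, c j • w' j,
        map_add' := by
          intro a b
          simp only [Pi.add_apply, add_smul]
          rw [Finset.sum_add_distrib],
        map_smul' := by
          intro c a
          simp only [Pi.smul_apply, smul_eq_mul, RingHom.id_apply]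
          rw [Finset.smul_sum]
          apply Finset.sum_congr rfl
          intro j _
          rw [smul_smul] } with hTdef
    have hTapp : ∀ c : Fin d2 → ℝ, T c = ∑ j, c j • w' j := fun c => rfl
    have hTinj : Function.Injective T := by
      intro a b hab
      have h0 : T (a - b) = 0 := by rw [map_sub, hab, sub_self]
      have h1 : ∑ j, (a - b) j • w' j = 0 := h0
      have h2 := linearIndependent_iff'.mp hw'li Finset.univ (a - b) h1
      funext j
      have h3 := h2 j (Finset.mem_univ j)
      simp only [Pi.sub_apply] at h3
      linarith [h3]
    have hmapZ : Submodule.map T (Submodule.span ℝ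
        ((fun u => fun i : Fin d2 => ((mfun u i : ℝ))) '' (U : Set ℝ))) = ⊤ := by
      rw [eq_top_iff]
      intro q _
      obtain ⟨v, rfl⟩ := Submodule.mkQ_surjective W q
      have hvspan := hspanX v
      have h1 : W.mkQ v ∈ Submodule.map W.mkQ (Submodule.span ℝ
          ({w : ↥H | ∃ u ∈ U, (w : Fin r → ℝ) = xfun u} : Set ↥H)) :=
        ⟨v, hvspan, rfl⟩
      rw [Submodule.map_span] at h1
      have h2 : W.mkQ '' ({w : ↥H | ∃ u ∈ U, (w : Fin r → ℝ) = xfun u} : Set ↥H) ⊆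
          (Submodule.map T (Submodule.span ℝ
            ((fun u => fun i : Fin d2 => ((mfun u i : ℝ))) '' (U : Set ℝ))) : Set (↥H ⧸ W)) := by
        rintro q' ⟨w'', ⟨u, hu, hw''⟩, rfl⟩
        have hwx : w'' = ⟨xfun u, hgen u hu⟩ := Subtype.ext hw''
        have h3 := (hmfun u hu).2.2 (hgen u hu)
        refine ⟨(fun j => (mfun u j : ℝ)), ?_, ?_⟩
        · apply Submodule.subset_span
          exact ⟨u, hu, rfl⟩
        · rw [hTapp, hwx, h3]
      have h4 := Submodule.span_le.mpr h2
      exact h4 h1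
    have htop : Submodule.map T ⊤ = ⊤ := by
      rw [eq_top_iff, ← hmapZ]
      exact Submodule.map_mono le_top
    exact Submodule.map_injective_of_injective hTinj (hmapZ.trans htop.symm)

end
end

section
/- Let A = (a_{ij}) be an n×n symmetric real matrix and let U ⊆ {1,…,n}. Define the n×n matrix A_U by A_U(i,j) = a_{ij} if exactly one of i, j belongs to U, and A_U(i,j) = 0 otherwise. Let v₁,…,vₙ, w₁,…,wₙ be iid copies of η^{1/2}. Then ρ_q(A)^8 ≤ P(Σ_{i,j} A_U(i,j)·v_i·w_j = 0). -/
open scoped Classical BigOperators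

noncomputable section

/-- The quadratic concentration probability `ρ_q(A) = sup_a P(Σ a_{ij} x_i x_j = a)`, where
`x` is a vector of iid Rademacher random variables. -/
def rhoQ (n : ℕ) (A : Matrix (Fin n) (Fin n) ℝ) : ℝ :=
  ⨆ a : ℝ, ((Finset.univ.filter fun x : Fin n → Bool =>
      ∑ i, ∑ j, A i j * signv (x i) * signv (x j) = a).card : ℝ) / 2 ^ n

/-- The three possible values of the lazy sign `η^μ`: `+1`, `-1`, `0`. -/
def etaV : Fin 3 → ℝ := ![1, -1, 0]

/-- The corresponding probability weights: `μ/2`, `μ/2`, `1 - μ`. -/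
def etaW (μ : ℝ) : Fin 3 → ℝ := ![μ / 2, μ / 2, 1 - μ]

/-- Probability of an event for a family of iid copies of `η^μ`, indexed by a finite
type. -/
def probEta (μ : ℝ) {ι : Type} [Fintype ι] (E : (ι → ℝ) → Prop) : ℝ :=
  ∑ s : ι → Fin 3, (∏ i, etaW μ (s i)) * (if E fun i => etaV (s i) then 1 else 0)

namespace DecAux

open Finset

lemma sq_sum_le {α : Type} [Fintype α] (f : α → ℝ) :
    (∑ a, f a) ^ 2 ≤ (Fintype.card α : ℝ) * ∑ a, f a ^ 2 := by
  simpa using sq_sum_le_card_mul_sum_sq (s := (univ : Finset α)) (f := f)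

lemma absCS {σ τ : Type} [Fintype σ] [Fintype τ] (K : σ → τ → ℝ) (hK : ∀ a b, 0 ≤ K a b) :
    (∑ a, ∑ b, K a b) ^ 4 ≤ (Fintype.card σ : ℝ) ^ 2 * (Fintype.card τ : ℝ) ^ 2 *
      ∑ a, ∑ a', ∑ b, ∑ b', K a b * K a b' * K a' b * K a' b' := by
  have h1 : (∑ a, ∑ b, K a b) = ∑ b, ∑ a, K a b := Finset.sum_comm
  have h2 : ∑ b, (∑ a, K a b) ^ 2 = ∑ a, ∑ a', ∑ b, K a b * K a' b := by
    have : ∀ b, (∑ a, K a b) ^ 2 = ∑ a, ∑ a', K a b * K a' b := by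
      intro b; rw [sq, Finset.sum_mul_sum]
    rw [Finset.sum_congr rfl fun b _ => this b]
    rw [Finset.sum_comm]
    exact Finset.sum_congr rfl fun a _ => Finset.sum_comm
  have h3 : ∀ a a', (∑ b, K a b * K a' b) ^ 2 = ∑ b, ∑ b', K a b * K a b' * K a' b * K a' b' := by
    intro a a'; rw [sq, Finset.sum_mul_sum]
    exact Finset.sum_congr rfl fun b _ => Finset.sum_congr rfl fun b' _ => by ring
  have c1 : (∑ b, ∑ a, K a b) ^ 2 ≤ (Fintype.card τ : ℝ) * ∑ b, (∑ a, K a b) ^ 2 :=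
    sq_sum_le _
  have c2 : (∑ a, ∑ a', ∑ b, K a b * K a' b) ^ 2 ≤
      (Fintype.card σ : ℝ) ^ 2 * ∑ a, ∑ a', (∑ b, K a b * K a' b) ^ 2 := by
    have := sq_sum_le (α := σ × σ) (fun p => ∑ b, K p.1 b * K p.2 b)
    rw [Fintype.sum_prod_type, Fintype.sum_prod_type] at this
    calc (∑ a, ∑ a', ∑ b, K a b * K a' b) ^ 2
        ≤ (Fintype.card (σ × σ) : ℝ) * ∑ a, ∑ a', (∑ b, K a b * K a' b) ^ 2 := this
      _ = (Fintype.card σ : ℝ) ^ 2 * ∑ a, ∑ a', (∑ b, K a b * K a' b) ^ 2 := by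
          rw [Fintype.card_prod]; push_cast; ring
  have hnn : (0:ℝ) ≤ ∑ b, (∑ a, K a b) ^ 2 := Finset.sum_nonneg fun _ _ => sq_nonneg _
  have hτ : (0:ℝ) ≤ (Fintype.card τ : ℝ) := Nat.cast_nonneg _
  calc (∑ a, ∑ b, K a b) ^ 4 = ((∑ b, ∑ a, K a b) ^ 2) ^ 2 := by rw [h1]; ring
    _ ≤ ((Fintype.card τ : ℝ) * ∑ b, (∑ a, K a b) ^ 2) ^ 2 := by
        apply pow_le_pow_left₀ (sq_nonneg _) c1
    _ = (Fintype.card τ : ℝ) ^ 2 * (∑ a, ∑ a', ∑ b, K a b * K a' b) ^ 2 := by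
        rw [h2]; ring
    _ ≤ (Fintype.card τ : ℝ) ^ 2 *
        ((Fintype.card σ : ℝ) ^ 2 * ∑ a, ∑ a', (∑ b, K a b * K a' b) ^ 2) := by
        apply mul_le_mul_of_nonneg_left c2 (by positivity)
    _ = (Fintype.card σ : ℝ) ^ 2 * (Fintype.card τ : ℝ) ^ 2 *
        ∑ a, ∑ a', ∑ b, ∑ b', K a b * K a b' * K a' b * K a' b' := by
        rw [Finset.sum_congr rfl fun a _ => Finset.sum_congr rfl fun a' _ => h3 a a']
        ring

variable (n : ℕ) (A : Matrix (Fin n) (Fin n) ℝ) (U : Finset (Fin n)) (a₀ : ℝ)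

def F (x : Fin n → Bool) : ℝ := ∑ i, ∑ j, A i j * signv (x i) * signv (x j)

def hh (x : Fin n → Bool) : ℝ := if F n A x = a₀ then 1 else 0

lemma hh_nonneg (x : Fin n → Bool) : 0 ≤ hh n A a₀ x := by
  unfold hh; split <;> norm_num

def mg (p q : Fin n → Bool) : Fin n → Bool := fun i => if i ∈ U then p i else q i

abbrev Su := {i : Fin n // i ∈ U} → Bool
abbrev Sc := {i : Fin n // i ∉ U} → Bool

def asm (a : Su n U) (b : Sc n U) : Fin n → Bool :=
  fun i => if h : i ∈ U then a ⟨i, h⟩ else b ⟨i, h⟩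

def K (a : Su n U) (b : Sc n U) : ℝ := hh n A a₀ (asm n U a b)

lemma mg_asm (a c : Su n U) (b d : Sc n U) :
    mg n U (asm n U a d) (asm n U c b) = asm n U a b := by
  funext i; by_cases h : i ∈ U <;> simp [mg, asm, h]

def eAsm : (Su n U × Sc n U) ≃ (Fin n → Bool) where
  toFun p := asm n U p.1 p.2
  invFun x := (fun i => x i.1, fun i => x i.1)
  left_inv p := by
    obtain ⟨a, b⟩ := p
    dsimp; congr 1 <;> funext i <;> simp [asm, i.2]
  right_inv x := by
    funext i; by_cases h : i ∈ U <;> simp [asm, h]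

def eBig : ((Fin n ⊕ Fin n) → Bool × Bool) ≃
    (((Su n U × Su n U) × (Sc n U × Sc n U)) × ((Su n U × Su n U) × (Sc n U × Sc n U))) where
  toFun t := (((fun i => (t (.inl i.1)).1, fun i => (t (.inl i.1)).2),
               (fun j => (t (.inr j.1)).1, fun j => (t (.inr j.1)).2)),
              ((fun i => (t (.inr i.1)).1, fun i => (t (.inr i.1)).2),
               (fun j => (t (.inl j.1)).1, fun j => (t (.inl j.1)).2)))
  invFun ω := fun k => match k with
    | .inl i => (asm n U ω.1.1.1 ω.2.2.1 i, asm n U ω.1.1.2 ω.2.2.2 i)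
    | .inr j => (asm n U ω.2.1.1 ω.1.2.1 j, asm n U ω.2.1.2 ω.1.2.2 j)
  left_inv t := by
    funext k
    rcases k with i | j
    · by_cases h : i ∈ U <;> simp [asm, h]
    · by_cases h : j ∈ U <;> simp [asm, h]
  right_inv ω := by
    obtain ⟨⟨⟨a, a'⟩, ⟨b, b'⟩⟩, ⟨⟨c, c'⟩, ⟨d, d'⟩⟩⟩ := ω
    have hU : ∀ (a : Su n U) (d : Sc n U), (fun i : {i : Fin n // i ∈ U} => asm n U a d i.1) = a := by
      intro a d; funext i; simp [asm, i.2]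
    have hC : ∀ (a : Su n U) (d : Sc n U), (fun j : {j : Fin n // j ∉ U} => asm n U a d j.1) = d := by
      intro a d; funext j; simp [asm, j.2]
    simp only [Prod.mk.injEq]
    exact ⟨⟨⟨hU a d, hU a' d'⟩, hC c b, hC c' b'⟩, ⟨hU c b, hU c' b'⟩, hC a d, hC a' d'⟩

lemma alg (hsym : A.IsSymm) (x x' y y' : Fin n → Bool) :
    F n A (mg n U x y) - F n A (mg n U x y') - F n A (mg n U x' y) + F n A (mg n U x' y')
      + F n A (mg n U y x) - F n A (mg n U y x') - F n A (mg n U y' x) + F n A (mg n U y' x')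
    = 8 * ∑ i, ∑ j, (if (i ∈ U ∧ j ∉ U) ∨ (i ∉ U ∧ j ∈ U) then A i j else 0)
        * ((signv (x i) - signv (x' i)) / 2) * ((signv (y j) - signv (y' j)) / 2) := by
  classical
  set P : Fin n → Fin n → ℝ := fun i j =>
    if (i ∈ U ∧ j ∉ U) ∨ (i ∉ U ∧ j ∈ U) then
      A i j * ((signv (x i) - signv (x' i)) * (signv (y j) - signv (y' j))) else 0 with hP
  set Q : Fin n → Fin n → ℝ := fun i j =>
    if (i ∈ U ∧ j ∉ U) ∨ (i ∉ U ∧ j ∈ U) then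
      A i j * ((signv (y i) - signv (y' i)) * (signv (x j) - signv (x' j))) else 0 with hQ
  have hswap : ∑ i, ∑ j, Q i j = ∑ i, ∑ j, P i j := by
    rw [Finset.sum_comm]
    refine Finset.sum_congr rfl fun i _ => Finset.sum_congr rfl fun j _ => ?_
    rw [hP, hQ]
    by_cases h1 : i ∈ U <;> by_cases h2 : j ∈ U <;>
      simp only [h1, h2, not_true_eq_false, not_false_eq_true, and_true, and_false,
        true_and, false_and, or_false, false_or, if_true, if_false, or_self] <;>
      rw [hsym.apply i j] <;> ring
  have hL : F n A (mg n U x y) - F n A (mg n U x y') - F n A (mg n U x' y) + F n A (mg n U x' y')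
      + F n A (mg n U y x) - F n A (mg n U y x') - F n A (mg n U y' x) + F n A (mg n U y' x')
      = ∑ i, ∑ j, (P i j + Q i j) := by
    simp only [F, ← Finset.sum_sub_distrib, ← Finset.sum_add_distrib]
    refine Finset.sum_congr rfl fun i _ => Finset.sum_congr rfl fun j _ => ?_
    rw [hP, hQ]
    by_cases h1 : i ∈ U <;> by_cases h2 : j ∈ U <;>
      simp only [mg, h1, h2, if_true, if_false, not_true_eq_false, not_false_eq_true,
        and_true, and_false, true_and, false_and, or_false, false_or, or_self] <;>
      ring
  rw [hL, Finset.sum_congr rfl fun (i : Fin n) _ => Finset.sum_add_distrib, Finset.sum_add_distrib,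
    hswap, Finset.mul_sum]
  rw [← Finset.sum_add_distrib]
  refine Finset.sum_congr rfl fun i _ => ?_
  rw [Finset.mul_sum, ← Finset.sum_add_distrib]
  refine Finset.sum_congr rfl fun j _ => ?_
  rw [hP]
  by_cases h : (i ∈ U ∧ j ∉ U) ∨ (i ∉ U ∧ j ∈ U) <;> simp only [h, if_true, if_false] <;> ring

lemma pointwise (hsym : A.IsSymm) (x x' y y' : Fin n → Bool) :
    hh n A a₀ (mg n U x y) * hh n A a₀ (mg n U x y') * hh n A a₀ (mg n U x' y)
      * hh n A a₀ (mg n U x' y') * hh n A a₀ (mg n U y x) * hh n A a₀ (mg n U y x')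
      * hh n A a₀ (mg n U y' x) * hh n A a₀ (mg n U y' x')
    ≤ (if (∑ i, ∑ j, (if (i ∈ U ∧ j ∉ U) ∨ (i ∉ U ∧ j ∈ U) then A i j else 0)
        * ((signv (x i) - signv (x' i)) / 2) * ((signv (y j) - signv (y' j)) / 2)) = 0
        then (1 : ℝ) else 0) := by
  classical
  by_cases H : F n A (mg n U x y) = a₀ ∧ F n A (mg n U x y') = a₀ ∧ F n A (mg n U x' y) = a₀
      ∧ F n A (mg n U x' y') = a₀ ∧ F n A (mg n U y x) = a₀ ∧ F n A (mg n U y x') = a₀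
      ∧ F n A (mg n U y' x) = a₀ ∧ F n A (mg n U y' x') = a₀
  · obtain ⟨h1, h2, h3, h4, h5, h6, h7, h8⟩ := H
    have hz : (∑ i, ∑ j, (if (i ∈ U ∧ j ∉ U) ∨ (i ∉ U ∧ j ∈ U) then A i j else 0)
        * ((signv (x i) - signv (x' i)) / 2) * ((signv (y j) - signv (y' j)) / 2)) = 0 := by
      have h := alg n A U hsym x x' y y'
      rw [h1, h2, h3, h4, h5, h6, h7, h8] at h
      linarith
    rw [if_pos hz]
    simp [hh, h1, h2, h3, h4, h5, h6, h7, h8]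
  · have hz : hh n A a₀ (mg n U x y) * hh n A a₀ (mg n U x y') * hh n A a₀ (mg n U x' y)
      * hh n A a₀ (mg n U x' y') * hh n A a₀ (mg n U y x) * hh n A a₀ (mg n U y x')
      * hh n A a₀ (mg n U y' x) * hh n A a₀ (mg n U y' x') = 0 := by
      simp only [not_and_or] at H
      rcases H with h | h | h | h | h | h | h | h <;> simp [hh, h]
    rw [hz]
    split <;> norm_num

def TT : Bool × Bool → Fin 3 := fun bc => if bc.1 = bc.2 then 2 else if bc.1 then 0 else 1

lemma card_TT (k : Fin 3) :
    (univ.filter fun bc : Bool × Bool => TT bc = k).card = if k = 2 then 2 else 1 := by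
  fin_cases k <;> decide

lemma etaV_TT (bc : Bool × Bool) : etaV (TT bc) = (signv bc.1 - signv bc.2) / 2 := by
  obtain ⟨b, c⟩ := bc
  cases b <;> cases c <;> norm_num [TT, etaV, signv] <;> rfl

lemma weight_TT (k : Fin 3) :
    ((univ.filter fun bc : Bool × Bool => TT bc = k).card : ℝ) * (1 / 4) = etaW (1 / 2) k := by
  fin_cases k <;> simp [card_TT, etaW] <;> norm_num

variable {n : ℕ}

lemma eta_elim (E : ((Fin n ⊕ Fin n) → ℝ) → Prop) :
    probEta (1 / 2) E = (∏ _i : (Fin n ⊕ Fin n), (1 / 4 : ℝ)) *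
      ∑ t : (Fin n ⊕ Fin n) → Bool × Bool,
        (if E fun k => (signv (t k).1 - signv (t k).2) / 2 then (1 : ℝ) else 0) := by
  classical
  have hfib : ∀ s : (Fin n ⊕ Fin n) → Fin 3,
      (univ.filter fun t : (Fin n ⊕ Fin n) → Bool × Bool => (fun k => TT (t k)) = s).card
        = ∏ k : (Fin n ⊕ Fin n), (univ.filter fun bc : Bool × Bool => TT bc = s k).card := by
    intro s
    have : (univ.filter fun t : (Fin n ⊕ Fin n) → Bool × Bool => (fun k => TT (t k)) = s)
        = Fintype.piFinset (fun k => univ.filter fun bc : Bool × Bool => TT bc = s k) := by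
      ext t
      simp [Fintype.mem_piFinset, funext_iff]
    rw [this, Fintype.card_piFinset]
  calc probEta (1 / 2) E
      = ∑ s : (Fin n ⊕ Fin n) → Fin 3, (∏ i, etaW (1 / 2) (s i)) *
          (if E fun k => etaV (s k) then (1 : ℝ) else 0) := by unfold probEta; congr!
    _ = ∑ s : (Fin n ⊕ Fin n) → Fin 3,
          ((∏ _i : Fin n ⊕ Fin n, (1 / 4 : ℝ)) *
            (∏ k, ((univ.filter fun bc : Bool × Bool => TT bc = s k).card : ℝ))) *
          (if E fun k => etaV (s k) then (1 : ℝ) else 0) := by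
        refine Finset.sum_congr rfl fun s _ => ?_
        congr 1
        rw [← Finset.prod_mul_distrib]
        refine (Finset.prod_congr rfl fun k _ => ?_).symm
        rw [mul_comm]; exact weight_TT (s k)
    _ = (∏ _i : Fin n ⊕ Fin n, (1 / 4 : ℝ)) *
          ∑ s : (Fin n ⊕ Fin n) → Fin 3,
            ((univ.filter fun t : (Fin n ⊕ Fin n) → Bool × Bool => (fun k => TT (t k)) = s).card : ℝ)
              * (if E fun k => etaV (s k) then (1 : ℝ) else 0) := by
        rw [Finset.mul_sum]
        refine Finset.sum_congr rfl fun s _ => ?_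
        rw [hfib s]; push_cast; ring
    _ = (∏ _i : Fin n ⊕ Fin n, (1 / 4 : ℝ)) *
          ∑ t : (Fin n ⊕ Fin n) → Bool × Bool,
            (if E fun k => etaV (TT (t k)) then (1 : ℝ) else 0) := by
        congr 1
        rw [← Finset.sum_fiberwise' (univ : Finset ((Fin n ⊕ Fin n) → Bool × Bool))
          (fun t k => TT (t k)) (fun s => if E fun k => etaV (s k) then (1 : ℝ) else 0)]
        exact Finset.sum_congr rfl fun s _ => by rw [Finset.sum_const, nsmul_eq_mul]
    _ = (∏ _i : (Fin n ⊕ Fin n), (1 / 4 : ℝ)) *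
          ∑ t : (Fin n ⊕ Fin n) → Bool × Bool,
            (if E fun k => (signv (t k).1 - signv (t k).2) / 2 then (1 : ℝ) else 0) := by
        congr 1
        exact Finset.sum_congr rfl fun t _ => by simp only [etaV_TT]


end DecAux

open DecAux Finset

/-- Decoupling: the concentration probability of the quadratic form of a symmetric matrix
`A` is controlled by the concentration of the bilinear form of the decoupled matrix `A_U`
(which keeps `a_{ij}` exactly when one of `i, j` lies in `U`), evaluated at independent
vectors `v, w` of iid copies of `η^{1/2}`:
`ρ_q(A)^8 ≤ P(Σ_{i,j} A_U(i,j) v_i w_j = 0)`. -/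
theorem decoupling_quadratic_bilinear (n : ℕ) (A : Matrix (Fin n) (Fin n) ℝ)
    (hsym : A.IsSymm) (U : Finset (Fin n)) :
    (rhoQ n A) ^ 8 ≤
      probEta (1 / 2) (fun vw : (Fin n ⊕ Fin n) → ℝ =>
        ∑ i, ∑ j,
          (if (i ∈ U ∧ j ∉ U) ∨ (i ∉ U ∧ j ∈ U) then A i j else 0) *
            vw (Sum.inl i) * vw (Sum.inr j) = 0) := by
  classical
  -- the probability of hitting a given value `a`
  set g : ℝ → ℝ := fun a => ((Finset.univ.filter fun x : Fin n → Bool =>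
      F n A x = a).card : ℝ) / 2 ^ n with hgdef
  have hrho : rhoQ n A = ⨆ a : ℝ, g a := rfl
  have hgnn : ∀ a, 0 ≤ g a := fun a => by
    rw [hgdef]; positivity
  -- a maximizer of g
  obtain ⟨a₀, hmax⟩ : ∃ a₀ : ℝ, ∀ a : ℝ, g a ≤ g a₀ := by
    obtain ⟨v, hv, hvmax⟩ := Finset.exists_max_image
      ((Finset.univ : Finset (Fin n → Bool)).image (F n A)) g
      ⟨F n A (fun _ => true), Finset.mem_image_of_mem _ (Finset.mem_univ _)⟩
    refine ⟨v, fun a => ?_⟩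
    by_cases ha : a ∈ (Finset.univ : Finset (Fin n → Bool)).image (F n A)
    · exact hvmax a ha
    · have hempty : (Finset.univ.filter fun x : Fin n → Bool => F n A x = a) = ∅ := by
        rw [Finset.filter_eq_empty_iff]
        intro x _ hx
        exact ha (Finset.mem_image.2 ⟨x, Finset.mem_univ x, hx⟩)
      have : g a = 0 := by rw [hgdef]; simp [hempty]
      rw [this]; exact hgnn v
  have hrho2 : rhoQ n A = g a₀ := by
    rw [hrho]
    refine le_antisymm (ciSup_le hmax) (le_ciSup ⟨g a₀, ?_⟩ a₀)
    rintro _ ⟨a, rfl⟩; exact hmax a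
  set cnt : ℝ := ∑ x : Fin n → Bool, hh n A a₀ x with hcntdef
  have hcnt : g a₀ = cnt / 2 ^ n := by
    rw [hgdef, hcntdef]
    congr 1
    rw [show (fun x : Fin n → Bool => hh n A a₀ x) = fun x => if F n A x = a₀ then (1:ℝ) else 0 from rfl]
    rw [Finset.sum_boole]
  have hcntnn : (0:ℝ) ≤ cnt := Finset.sum_nonneg fun x _ => hh_nonneg n A a₀ x
  rw [hrho2, hcnt, eta_elim]
  -- abbreviations
  set S : ℝ := ∑ q : (Su n U × Su n U) × (Sc n U × Sc n U),
      K n A U a₀ q.1.1 q.2.1 * K n A U a₀ q.1.1 q.2.2 *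
      K n A U a₀ q.1.2 q.2.1 * K n A U a₀ q.1.2 q.2.2 with hSdef
  have hSnn : (0:ℝ) ≤ S := Finset.sum_nonneg fun q _ => by
    have h1 := hh_nonneg n A a₀ (asm n U q.1.1 q.2.1)
    have h2 := hh_nonneg n A a₀ (asm n U q.1.1 q.2.2)
    have h3 := hh_nonneg n A a₀ (asm n U q.1.2 q.2.1)
    have h4 := hh_nonneg n A a₀ (asm n U q.1.2 q.2.2)
    unfold K
    positivity
  -- the kernel sum equals cnt
  have hKsum : (∑ a : Su n U, ∑ b : Sc n U, K n A U a₀ a b) = cnt := by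
    rw [hcntdef, ← Equiv.sum_comp (eAsm n U) (hh n A a₀), Fintype.sum_prod_type]
    rfl
  -- cardinality
  have hcard : ((Fintype.card (Su n U) : ℝ)) * ((Fintype.card (Sc n U) : ℝ)) = 2 ^ n := by
    have h := Fintype.card_congr (eAsm n U)
    rw [Fintype.card_prod, Fintype.card_fun] at h
    have : Fintype.card (Su n U) * Fintype.card (Sc n U) = 2 ^ n := by
      simpa using h
    exact_mod_cast congrArg (fun m : ℕ => (m : ℝ)) this
  -- Cauchy–Schwarz
  have hCS : cnt ^ 4 ≤ ((2:ℝ) ^ n) ^ 2 * S := by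
    have h := absCS (K n A U a₀) (fun a b => hh_nonneg n A a₀ (asm n U a b))
    rw [hKsum] at h
    have hS4 : (∑ a : Su n U, ∑ a' : Su n U, ∑ b : Sc n U, ∑ b' : Sc n U,
        K n A U a₀ a b * K n A U a₀ a b' * K n A U a₀ a' b * K n A U a₀ a' b') = S := by
      rw [hSdef]
      simp only [Fintype.sum_prod_type]
    rw [hS4] at h
    calc cnt ^ 4 ≤ (Fintype.card (Su n U) : ℝ) ^ 2 * (Fintype.card (Sc n U) : ℝ) ^ 2 * S := h
      _ = ((2:ℝ) ^ n) ^ 2 * S := by rw [← mul_pow, hcard]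
  -- the big indicator sum dominates `S * S`
  have hbig : S * S ≤ ∑ t : (Fin n ⊕ Fin n) → Bool × Bool,
      (if (fun vw : (Fin n ⊕ Fin n) → ℝ =>
        ∑ i, ∑ j,
          (if (i ∈ U ∧ j ∉ U) ∨ (i ∉ U ∧ j ∈ U) then A i j else 0) *
            vw (Sum.inl i) * vw (Sum.inr j) = 0)
        (fun k => (signv (t k).1 - signv (t k).2) / 2) then (1:ℝ) else 0) := by
    have hre := Equiv.sum_comp (eBig n U).symm
      (fun t : (Fin n ⊕ Fin n) → Bool × Bool =>
        (if (fun vw : (Fin n ⊕ Fin n) → ℝ =>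
          ∑ i, ∑ j,
            (if (i ∈ U ∧ j ∉ U) ∨ (i ∉ U ∧ j ∈ U) then A i j else 0) *
              vw (Sum.inl i) * vw (Sum.inr j) = 0)
          (fun k => (signv (t k).1 - signv (t k).2) / 2) then (1:ℝ) else 0))
    rw [← hre, Fintype.sum_prod_type]
    have hprod : S * S = ∑ p : (Su n U × Su n U) × (Sc n U × Sc n U),
        ∑ q : (Su n U × Su n U) × (Sc n U × Sc n U),
        (K n A U a₀ p.1.1 p.2.1 * K n A U a₀ p.1.1 p.2.2 *
         K n A U a₀ p.1.2 p.2.1 * K n A U a₀ p.1.2 p.2.2) *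
        (K n A U a₀ q.1.1 q.2.1 * K n A U a₀ q.1.1 q.2.2 *
         K n A U a₀ q.1.2 q.2.1 * K n A U a₀ q.1.2 q.2.2) := by
      rw [hSdef, Fintype.sum_mul_sum]
    rw [hprod]
    refine Finset.sum_le_sum fun p _ => Finset.sum_le_sum fun q _ => ?_
    obtain ⟨⟨a, a'⟩, b, b'⟩ := p
    obtain ⟨⟨c, c'⟩, d, d'⟩ := q
    have hp := pointwise n A U a₀ hsym (asm n U a d) (asm n U a' d') (asm n U c b) (asm n U c' b')
    simp only [mg_asm] at hp
    exact le_trans (le_of_eq (by unfold K; ring)) hp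
  -- final numeric computation
  have h14 : (∏ _i : Fin n ⊕ Fin n, (1/4 : ℝ)) = (((2:ℝ) ^ n) ^ 4)⁻¹ := by
    rw [Finset.prod_const]
    have hc : (Finset.univ : Finset (Fin n ⊕ Fin n)).card = n + n := by simp
    rw [hc, show ((1:ℝ)/4) = ((2:ℝ)^2)⁻¹ by norm_num, inv_pow, ← pow_mul, ← pow_mul]
    congr 2
    ring
  have h2npos : (0:ℝ) < (2:ℝ) ^ n := by positivity
  have h8 : cnt ^ 8 ≤ ((2:ℝ) ^ n) ^ 4 * (S * S) := by
    have h := pow_le_pow_left₀ (by positivity : (0:ℝ) ≤ cnt ^ 4) hCS 2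
    calc cnt ^ 8 = (cnt ^ 4) ^ 2 := by ring
      _ ≤ (((2:ℝ) ^ n) ^ 2 * S) ^ 2 := h
      _ = ((2:ℝ) ^ n) ^ 4 * (S * S) := by ring
  calc (cnt / 2 ^ n) ^ 8 = cnt ^ 8 / ((2:ℝ) ^ n) ^ 8 := by rw [div_pow]
    _ ≤ (((2:ℝ) ^ n) ^ 4 * (S * S)) / ((2:ℝ) ^ n) ^ 8 := by gcongr
    _ = (((2:ℝ) ^ n) ^ 4)⁻¹ * (S * S) := by
        field_simp
    _ ≤ (((2:ℝ) ^ n) ^ 4)⁻¹ * ∑ t : (Fin n ⊕ Fin n) → Bool × Bool,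
        (if (fun vw : (Fin n ⊕ Fin n) → ℝ =>
          ∑ i, ∑ j,
            (if (i ∈ U ∧ j ∉ U) ∨ (i ∉ U ∧ j ∈ U) then A i j else 0) *
              vw (Sum.inl i) * vw (Sum.inr j) = 0)
          (fun k => (signv (t k).1 - signv (t k).2) / 2) then (1:ℝ) else 0) := by
        apply mul_le_mul_of_nonneg_left hbig
        positivity
    _ = _ := by rw [h14]

end
end
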